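/- arXiv:math/0307002 — 4 statements merged into one kernel-verified Lean document; each statement's English description precedes it below -/
import Mathlib

section
/- Assume that S ∈ sp(n,ℂ) satisfies condition (R) and that N_r² = 0, where N_r is the nilpotent part in the Jordan decomposition of S_r. Then Re Q_S ≥ 0 implies Re Q_{S_r} ≥ 0, i.e. Re σ(z̄, S_r z) ≥ 0 for all z ∈ ℂ^{2n}. -/
open MeasureTheory Complex Matrix

noncomputable section

/-- Index type for `2n`-dimensional (symplectic) vectors: `X`-coordinates `inl j`,
`Y`-coordinates `inr j`. -/
abbrev Idx (n : ℕ) := Fin n ⊕ Fin n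

/-- The standard symplectic matrix `J = [[0, I],[-I, 0]]` over `ℂ`. -/
def Jmat (n : ℕ) : Matrix (Idx n) (Idx n) ℂ := Matrix.fromBlocks 0 1 (-1) 0

/-- The standard symplectic matrix `J = [[0, I],[-I, 0]]` over `ℝ`. -/
def JmatR (n : ℕ) : Matrix (Idx n) (Idx n) ℝ := Matrix.fromBlocks 0 1 (-1) 0

/-- The standard symplectic form `σ(z,w) = ᵗz J w` on `ℂ^{2n}`. -/
def sigmaC (n : ℕ) (z w : Idx n → ℂ) : ℂ := z ⬝ᵥ (Jmat n).mulVec w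

/-- The standard symplectic form on `ℝ^{2n}`. -/
def sigmaR (n : ℕ) (v w : Idx n → ℝ) : ℝ := v ⬝ᵥ (JmatR n).mulVec w

/-- Inclusion of real vectors into `ℂ^{2n}`. -/
def realVec (n : ℕ) (v : Idx n → ℝ) : Idx n → ℂ := fun i => (v i : ℂ)

/-- Complex conjugation on `ℂ^{2n}` relative to the real form `ℝ^{2n}`. -/
def conjVec (n : ℕ) (z : Idx n → ℂ) : Idx n → ℂ := fun i => (starRingEnd ℂ) (z i)

/-- `S ∈ sp(n, ℂ)`, i.e. `σ(Sz, w) + σ(z, Sw) = 0` for all `z, w`. -/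
def InSp (n : ℕ) (S : Matrix (Idx n) (Idx n) ℂ) : Prop := Sᵀ * Jmat n + Jmat n * S = 0

/-- `Re Q_S ≥ 0`: the real part of the quadratic form `Q_S(v) = σ(v, Sv)` is
positive semi-definite on `ℝ^{2n}`. -/
def RePosQ (n : ℕ) (S : Matrix (Idx n) (Idx n) ℂ) : Prop :=
  ∀ v : Idx n → ℝ, 0 ≤ (sigmaC n (realVec n v) (S.mulVec (realVec n v))).re

/-- The generalized eigenspace `V_μ` of the matrix `S` for the eigenvalue `μ`. -/
def genEig (n : ℕ) (S : Matrix (Idx n) (Idx n) ℂ) (μ : ℂ) : Submodule ℂ (Idx n → ℂ) :=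
  Module.End.maxGenEigenspace (Matrix.mulVecLin S) μ

/-- `V_r`: the sum of the generalized eigenspaces of `S` for real eigenvalues. -/
def Vreal (n : ℕ) (S : Matrix (Idx n) (Idx n) ℂ) : Submodule ℂ (Idx n → ℂ) :=
  ⨆ lam : ℝ, genEig n S (lam : ℂ)

/-- `V_i`: the sum of the generalized eigenspaces of `S` for non-real eigenvalues. -/
def Vimag (n : ℕ) (S : Matrix (Idx n) (Idx n) ℂ) : Submodule ℂ (Idx n → ℂ) :=
  ⨆ μ : {z : ℂ // z.im ≠ 0}, genEig n S (μ : ℂ)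

/-- `Sr` is the "real part" `S_r` of `S`: it agrees with `S` on `V_r` and vanishes on `V_i`. -/
def IsRealPart (n : ℕ) (S Sr : Matrix (Idx n) (Idx n) ℂ) : Prop :=
  (∀ v ∈ Vreal n S, Sr.mulVec v = S.mulVec v) ∧ ∀ v ∈ Vimag n S, Sr.mulVec v = 0

/-- `Si` is the "imaginary part" `S_i` of `S`: it vanishes on `V_r` and agrees with `S`
on `V_i`. -/
def IsImagPart (n : ℕ) (S Si : Matrix (Idx n) (Idx n) ℂ) : Prop :=
  (∀ v ∈ Vreal n S, Si.mulVec v = 0) ∧ ∀ v ∈ Vimag n S, Si.mulVec v = S.mulVec v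

/-- Condition (R): `V_λ ⊕ V_{−λ}` is invariant under complex conjugation for every
real `λ ≠ 0`. -/
def CondR (n : ℕ) (S : Matrix (Idx n) (Idx n) ℂ) : Prop :=
  ∀ lam : ℝ, lam ≠ 0 →
    ∀ z ∈ genEig n S (lam : ℂ) ⊔ genEig n S (-(lam : ℂ)),
      conjVec n z ∈ genEig n S (lam : ℂ) ⊔ genEig n S (-(lam : ℂ))

/-- `ν = Σ_j ν_j`: the sum of the imaginary parts of the eigenvalues of `S` lying in the
upper half plane, counted with multiplicity. -/
def nuTotal (n : ℕ) (S : Matrix (Idx n) (Idx n) ℂ) : ℝ :=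
  (S.charpoly.roots.map (fun z => max z.im 0)).sum

/-- `S_i ≠ 0`, i.e. `S` has at least one non-real eigenvalue. -/
def HasNonrealEig (n : ℕ) (S : Matrix (Idx n) (Idx n) ℂ) : Prop :=
  ∃ z ∈ S.charpoly.roots, z.im ≠ 0

/-- Semisimple (= diagonalizable over `ℂ`) matrix. -/
def IsSemisimpleMat (n : ℕ) (D : Matrix (Idx n) (Idx n) ℂ) : Prop :=
  ∃ (P : Matrix (Idx n) (Idx n) ℂ) (d : Idx n → ℂ), IsUnit P ∧ D = P * Matrix.diagonal d * P⁻¹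

/-- `S = D + N` is the Jordan decomposition of `S`: `D` semisimple, `N` nilpotent,
`DN = ND`. -/
def IsJordanDecomp (n : ℕ) (S D N : Matrix (Idx n) (Idx n) ℂ) : Prop :=
  S = D + N ∧ IsSemisimpleMat n D ∧ IsNilpotent N ∧ D * N = N * D

/-- The sum of the generalised eigenspaces for nonzero real eigenvalues. -/
def Wsp (n : ℕ) (S : Matrix (Idx n) (Idx n) ℂ) : Submodule ℂ (Idx n → ℂ) :=
  ⨆ l : {l : ℝ // l ≠ 0}, genEig n S ((l : ℝ) : ℂ)


namespace Aux
variable {n : ℕ} {S : Matrix (Idx n) (Idx n) ℂ}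

lemma Jmat_conj (n : ℕ) (i j : Idx n) : (starRingEnd ℂ) (Jmat n i j) = Jmat n i j := by
  rcases i with i | i <;> rcases j with j | j <;>
    simp [Jmat, Matrix.one_apply] <;> split <;> simp

lemma Jmat_transpose (n : ℕ) : (Jmat n)ᵀ = -(Jmat n) := by
  simp only [Jmat, Matrix.fromBlocks_transpose, Matrix.transpose_zero, Matrix.transpose_one,
    Matrix.transpose_neg, Matrix.fromBlocks_neg, neg_zero, neg_neg]

lemma sigmaC_add_left (a b c : Idx n → ℂ) : sigmaC n (a + b) c = sigmaC n a c + sigmaC n b c := by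
  simp [sigmaC, add_dotProduct]

lemma sigmaC_add_right (a b c : Idx n → ℂ) : sigmaC n a (b + c) = sigmaC n a b + sigmaC n a c := by
  simp [sigmaC, mulVec_add, dotProduct_add]

lemma sigmaC_sub_left (a b c : Idx n → ℂ) : sigmaC n (a - b) c = sigmaC n a c - sigmaC n b c := by
  simp [sigmaC, sub_dotProduct]

lemma sigmaC_sub_right (a b c : Idx n → ℂ) : sigmaC n a (b - c) = sigmaC n a b - sigmaC n a c := by
  simp [sigmaC, mulVec_sub, dotProduct_sub]

lemma sigmaC_smul_left (t : ℂ) (a b : Idx n → ℂ) : sigmaC n (t • a) b = t * sigmaC n a b := by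
  simp [sigmaC, smul_dotProduct, smul_eq_mul]

lemma sigmaC_smul_right (t : ℂ) (a b : Idx n → ℂ) : sigmaC n a (t • b) = t * sigmaC n a b := by
  simp [sigmaC, mulVec_smul, dotProduct_smul, smul_eq_mul]

lemma sigmaC_zero_left (b : Idx n → ℂ) : sigmaC n 0 b = 0 := by simp [sigmaC]

lemma sigmaC_zero_right (a : Idx n → ℂ) : sigmaC n a 0 = 0 := by simp [sigmaC]

lemma sigmaC_conj (a b : Idx n → ℂ) :
    sigmaC n (conjVec n a) (conjVec n b) = (starRingEnd ℂ) (sigmaC n a b) := by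
  simp [sigmaC, conjVec, dotProduct, mulVec, map_sum, _root_.map_mul, Jmat_conj]

lemma sigmaC_antisymm (a b : Idx n → ℂ) : sigmaC n a b = - sigmaC n b a := by
  rw [sigmaC, dotProduct_mulVec, ← Matrix.mulVec_transpose, Jmat_transpose, Matrix.neg_mulVec, neg_dotProduct,
    dotProduct_comm]
  rfl

lemma conjVec_add (a b : Idx n → ℂ) : conjVec n (a + b) = conjVec n a + conjVec n b :=
  funext fun i => map_add _ _ _

lemma conjVec_smul (t : ℂ) (a : Idx n → ℂ) :
    conjVec n (t • a) = (starRingEnd ℂ) t • conjVec n a :=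
  funext fun i => by simp [conjVec, smul_eq_mul]

lemma conjVec_conjVec (a : Idx n → ℂ) : conjVec n (conjVec n a) = a :=
  funext fun i => by simp [conjVec]

lemma conjVec_zero : conjVec n (0 : Idx n → ℂ) = 0 := funext fun i => by simp [conjVec]

lemma dot_mulVec_left (A : Matrix (Idx n) (Idx n) ℂ) (a b : Idx n → ℂ) :
    (A.mulVec a) ⬝ᵥ b = a ⬝ᵥ (Aᵀ.mulVec b) := by
  rw [dotProduct_comm, dotProduct_mulVec, dotProduct_comm, Matrix.mulVec_transpose]

lemma sp_skew (hS : InSp n S) (a b : Idx n → ℂ) :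
    sigmaC n (S.mulVec a) b = - sigmaC n a (S.mulVec b) := by
  have h : Sᵀ * Jmat n = -(Jmat n * S) := eq_neg_of_add_eq_zero_left hS
  rw [sigmaC, dot_mulVec_left, Matrix.mulVec_mulVec, h, Matrix.neg_mulVec, dotProduct_neg,
    ← Matrix.mulVec_mulVec]
  rfl

lemma sp_symm (hS : InSp n S) (a b : Idx n → ℂ) :
    sigmaC n a (S.mulVec b) = sigmaC n b (S.mulVec a) := by
  rw [sigmaC_antisymm, sp_skew hS b a, neg_neg]


lemma repos_ext (hS : InSp n S) (hpos : RePosQ n S) (y : Idx n → ℂ) :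
    0 ≤ (sigmaC n (conjVec n y) (S.mulVec y)).re := by
  set a : Idx n → ℝ := fun i => (y i).re with ha
  set b : Idx n → ℝ := fun i => (y i).im with hb
  have hy : y = realVec n a + Complex.I • realVec n b := by
    funext i
    simp [realVec, ha, hb, Complex.ext_iff]
  have hyc : conjVec n y = realVec n a - Complex.I • realVec n b := by
    funext i
    simp [conjVec, realVec, ha, hb, Complex.ext_iff]
  have hsym := sp_symm hS (realVec n a) (realVec n b)
  have key : sigmaC n (conjVec n y) (S.mulVec y)
      = sigmaC n (realVec n a) (S.mulVec (realVec n a))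
        + sigmaC n (realVec n b) (S.mulVec (realVec n b)) := by
    rw [hyc]
    conv_lhs => rw [hy]
    rw [mulVec_add, mulVec_smul, sigmaC_sub_left, sigmaC_add_right, sigmaC_add_right,
      sigmaC_smul_left, sigmaC_smul_right, sigmaC_smul_right, sigmaC_smul_left]
    rw [hsym]
    have hI : (Complex.I) * Complex.I = -1 := Complex.I_mul_I
    linear_combination (-(sigmaC n (realVec n b) (S.mulVec (realVec n b)))) * hI
  rw [key, Complex.add_re]
  exact add_nonneg (hpos a) (hpos b)

lemma ker_orth (hS : InSp n S) (hpos : RePosQ n S) {m : Idx n → ℂ}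
    (hm : S.mulVec m = 0) (y : Idx n → ℂ) :
    sigmaC n (conjVec n m) (S.mulVec y) = 0 := by
  by_contra hc
  set c := sigmaC n (conjVec n m) (S.mulVec y) with hcdef
  set s : ℝ := (sigmaC n (conjVec n y) (S.mulVec y)).re + 1 with hs
  set t : ℂ := (starRingEnd ℂ) (-(s : ℂ) / c) with ht
  have hkey := repos_ext hS hpos (y + t • m)
  have h1 : S.mulVec (y + t • m) = S.mulVec y := by
    rw [mulVec_add, mulVec_smul, hm, smul_zero, add_zero]
  have h2 : conjVec n (y + t • m) = conjVec n y + ((starRingEnd ℂ) t) • conjVec n m := by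
    rw [conjVec_add, conjVec_smul]
  rw [h1, h2, sigmaC_add_left, sigmaC_smul_left] at hkey
  have h3 : (starRingEnd ℂ) t * c = -(s : ℂ) := by
    rw [ht, Complex.conj_conj, div_mul_cancel₀ _ hc]
  rw [← hcdef, h3, Complex.add_re] at hkey
  simp only [Complex.neg_re, Complex.ofReal_re, hs] at hkey
  linarith

lemma ker_orth' (hS : InSp n S) (hpos : RePosQ n S) {p : Idx n → ℂ}
    (hp : S.mulVec p = 0) (y : Idx n → ℂ) :
    sigmaC n (conjVec n (S.mulVec y)) p = 0 := by
  rw [sigmaC_antisymm]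
  have : sigmaC n p (conjVec n (S.mulVec y))
      = sigmaC n (conjVec n (conjVec n p)) (conjVec n (S.mulVec y)) := by
    rw [conjVec_conjVec]
  rw [this, sigmaC_conj, ker_orth hS hpos hp y, map_zero, neg_zero]


lemma sp_key (hS : InSp n S) (μ ν : ℂ) (u v : Idx n → ℂ) :
    sigmaC n ((S.mulVecLin - μ • 1) u) v + sigmaC n u ((S.mulVecLin - ν • 1) v)
      = -(μ + ν) * sigmaC n u v := by
  have h1 : (S.mulVecLin - μ • (1 : Module.End ℂ (Idx n → ℂ))) u = S.mulVec u - μ • u := by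
    simp [Matrix.mulVecLin_apply]
  have h2 : (S.mulVecLin - ν • (1 : Module.End ℂ (Idx n → ℂ))) v = S.mulVec v - ν • v := by
    simp [Matrix.mulVecLin_apply]
  rw [h1, h2, sigmaC_sub_left, sigmaC_sub_right, sigmaC_smul_left, sigmaC_smul_right,
    sp_skew hS u v]
  ring

lemma genEig_orth_aux (hS : InSp n S) {μ ν : ℂ} (hμν : μ + ν ≠ 0) :
    ∀ (k l : ℕ) (u v : Idx n → ℂ), ((S.mulVecLin - μ • 1) ^ k) u = 0 →
      ((S.mulVecLin - ν • 1) ^ l) v = 0 → sigmaC n u v = 0 := by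
  intro k
  induction k with
  | zero =>
    intro l u v hu _
    rw [pow_zero, Module.End.one_apply] at hu
    rw [hu, sigmaC_zero_left]
  | succ k ih =>
    intro l
    induction l with
    | zero =>
      intro u v _ hv
      rw [pow_zero, Module.End.one_apply] at hv
      rw [hv, sigmaC_zero_right]
    | succ l ih2 =>
      intro u v hu hv
      have h1 : sigmaC n ((S.mulVecLin - μ • 1) u) v = 0 := by
        refine ih (l + 1) ((S.mulVecLin - μ • 1) u) v ?_ hv
        rw [← Module.End.mul_apply, ← pow_succ]; exact hu
      have h2 : sigmaC n u ((S.mulVecLin - ν • 1) v) = 0 := by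
        refine ih2 u ((S.mulVecLin - ν • 1) v) hu ?_
        rw [← Module.End.mul_apply, ← pow_succ]; exact hv
      have h3 := sp_key hS μ ν u v
      rw [h1, h2, add_zero] at h3
      rcases mul_eq_zero.mp h3.symm with h | h
      · exact absurd (neg_eq_zero.mp h) hμν
      · exact h

lemma genEig_orth (hS : InSp n S) {μ ν : ℂ} (hμν : μ + ν ≠ 0) {u v : Idx n → ℂ}
    (hu : u ∈ genEig n S μ) (hv : v ∈ genEig n S ν) : sigmaC n u v = 0 := by
  rw [genEig, Module.End.mem_maxGenEigenspace] at hu hv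
  obtain ⟨k, hk⟩ := hu
  obtain ⟨l, hl⟩ := hv
  exact genEig_orth_aux hS hμν k l u v hk hl

lemma genEig_le_range_aux {μ : ℂ} (hμ : μ ≠ 0) :
    ∀ (k : ℕ) (u : Idx n → ℂ), ((S.mulVecLin - μ • 1) ^ k) u = 0 →
      u ∈ LinearMap.range S.mulVecLin := by
  intro k
  induction k with
  | zero =>
    intro u hk
    rw [pow_zero, Module.End.one_apply] at hk
    rw [hk]; exact zero_mem _
  | succ k ih =>
    intro u hk
    have h1 : (S.mulVecLin - μ • 1) u ∈ LinearMap.range S.mulVecLin := by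
      refine ih _ ?_
      rw [← Module.End.mul_apply, ← pow_succ]; exact hk
    have h2 : u = μ⁻¹ • (S.mulVecLin u) - μ⁻¹ • ((S.mulVecLin - μ • 1) u) := by
      rw [LinearMap.sub_apply, LinearMap.smul_apply, Module.End.one_apply, smul_sub,
        smul_smul, inv_mul_cancel₀ hμ, one_smul]
      abel
    rw [h2]
    exact Submodule.sub_mem _ (Submodule.smul_mem _ _ (LinearMap.mem_range_self _ u))
      (Submodule.smul_mem _ _ h1)

lemma genEig_le_range {μ : ℂ} (hμ : μ ≠ 0) :
    genEig n S μ ≤ LinearMap.range S.mulVecLin := by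
  intro u hu
  rw [genEig, Module.End.mem_maxGenEigenspace] at hu
  obtain ⟨k, hk⟩ := hu
  exact genEig_le_range_aux hμ k u hk

lemma mulVec_mem_genEig {μ : ℂ} {u : Idx n → ℂ} (hu : u ∈ genEig n S μ) :
    S.mulVec u ∈ genEig n S μ := by
  rw [← Matrix.mulVecLin_apply]
  exact Module.End.mapsTo_maxGenEigenspace_of_comm (Commute.refl S.mulVecLin) μ hu


lemma Wsp_le_Vreal : Wsp n S ≤ Vreal n S :=
  iSup_le fun l => le_iSup (fun lam : ℝ => genEig n S (lam : ℂ)) (l : ℝ)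

lemma genEig_zero_le_Vreal : genEig n S 0 ≤ Vreal n S := by
  have := le_iSup (fun lam : ℝ => genEig n S (lam : ℂ)) (0 : ℝ)
  rwa [Complex.ofReal_zero] at this

lemma decomp (z : Idx n → ℂ) :
    ∃ w z0 zi, w ∈ Wsp n S ∧ z0 ∈ genEig n S 0 ∧ zi ∈ Vimag n S ∧ z = w + z0 + zi := by
  have htop := Module.End.iSup_maxGenEigenspace_eq_top (S.mulVecLin)
  have hz : z ∈ ⨆ μ : ℂ, Module.End.maxGenEigenspace S.mulVecLin μ := by
    rw [htop]; exact Submodule.mem_top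
  refine Submodule.iSup_induction (motive := fun x =>
    ∃ w z0 zi, w ∈ Wsp n S ∧ z0 ∈ genEig n S 0 ∧ zi ∈ Vimag n S ∧ x = w + z0 + zi)
    _ hz ?_ ?_ ?_
  · intro μ x hx
    by_cases h0 : μ = 0
    · exact ⟨0, x, 0, zero_mem _, by rw [← h0]; exact hx, zero_mem _, by abel⟩
    by_cases him : μ.im = 0
    · refine ⟨x, 0, 0, ?_, zero_mem _, zero_mem _, by abel⟩
      have hre : (μ.re : ℝ) ≠ 0 := fun h => h0 (Complex.ext h him)
      have hμ : ((μ.re : ℝ) : ℂ) = μ := Complex.ext (by simp) (by simp [him.symm])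
      have hle : genEig n S ((μ.re : ℝ) : ℂ) ≤ Wsp n S :=
        le_iSup (fun l : {l : ℝ // l ≠ 0} => genEig n S ((l : ℝ) : ℂ)) ⟨μ.re, hre⟩
      exact hle (by rw [hμ]; exact hx)
    · refine ⟨0, 0, x, zero_mem _, zero_mem _, ?_, by abel⟩
      have hle : genEig n S μ ≤ Vimag n S :=
        le_iSup (fun ν : {z : ℂ // z.im ≠ 0} => genEig n S (ν : ℂ)) ⟨μ, him⟩
      exact hle hx
  · exact ⟨0, 0, 0, zero_mem _, zero_mem _, zero_mem _, by abel⟩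
  · rintro x y ⟨w1, a1, b1, hw1, ha1, hb1, rfl⟩ ⟨w2, a2, b2, hw2, ha2, hb2, rfl⟩
    exact ⟨w1 + w2, a1 + a2, b1 + b2, add_mem hw1 hw2, add_mem ha1 ha2, add_mem hb1 hb2,
      by abel⟩

lemma conj_Wsp (hR : CondR n S) {x : Idx n → ℂ} (hx : x ∈ Wsp n S) :
    conjVec n x ∈ Wsp n S := by
  refine Submodule.iSup_induction (motive := fun x => conjVec n x ∈ Wsp n S) _ hx ?_ ?_ ?_
  · rintro ⟨l, hl⟩ x hxl
    have h1 : x ∈ genEig n S (l : ℂ) ⊔ genEig n S (-(l : ℂ)) := Submodule.mem_sup_left hxl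
    have h2 := hR l hl x h1
    have hle : genEig n S (l : ℂ) ⊔ genEig n S (-(l : ℂ)) ≤ Wsp n S := by
      refine sup_le (le_iSup (fun l : {l : ℝ // l ≠ 0} => genEig n S ((l : ℝ) : ℂ)) ⟨l, hl⟩) ?_
      have := le_iSup (fun l : {l : ℝ // l ≠ 0} => genEig n S ((l : ℝ) : ℂ))
        ⟨-l, neg_ne_zero.mpr hl⟩
      rwa [Complex.ofReal_neg] at this
    exact hle h2
  · show conjVec n (0 : Idx n → ℂ) ∈ Wsp n S
    rw [conjVec_zero]; exact zero_mem _
  · intro a b ha hb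
    show conjVec n (a + b) ∈ Wsp n S
    rw [conjVec_add]; exact add_mem ha hb

lemma mulVec_Wsp {x : Idx n → ℂ} (hx : x ∈ Wsp n S) : S.mulVec x ∈ Wsp n S := by
  refine Submodule.iSup_induction (motive := fun x => S.mulVec x ∈ Wsp n S) _ hx ?_ ?_ ?_
  · intro l x hxl
    exact Submodule.mem_iSup_of_mem l (mulVec_mem_genEig hxl)
  · show S.mulVec (0 : Idx n → ℂ) ∈ Wsp n S
    rw [mulVec_zero]; exact zero_mem _
  · intro a b ha hb
    show S.mulVec (a + b) ∈ Wsp n S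
    rw [mulVec_add]; exact add_mem ha hb

lemma sigma_Wsp_V0 (hS : InSp n S) {a b : Idx n → ℂ} (ha : a ∈ Wsp n S)
    (hb : b ∈ genEig n S 0) : sigmaC n a b = 0 := by
  refine Submodule.iSup_induction (motive := fun a => sigmaC n a b = 0) _ ha ?_ ?_ ?_
  · rintro ⟨l, hl⟩ x hxl
    refine genEig_orth hS ?_ hxl hb
    simpa using hl
  · exact sigmaC_zero_left b
  · intro x y hx hy
    show sigmaC n (x + y) b = 0
    rw [sigmaC_add_left, hx, hy, add_zero]

lemma sigma_V0_Wsp (hS : InSp n S) {a b : Idx n → ℂ} (ha : a ∈ genEig n S 0)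
    (hb : b ∈ Wsp n S) : sigmaC n a b = 0 := by
  refine Submodule.iSup_induction (motive := fun b => sigmaC n a b = 0) _ hb ?_ ?_ ?_
  · rintro ⟨l, hl⟩ x hxl
    refine genEig_orth hS ?_ ha hxl
    simpa using hl
  · exact sigmaC_zero_right a
  · intro x y hx hy
    show sigmaC n a (x + y) = 0
    rw [sigmaC_add_right, hx, hy, add_zero]

lemma sigma_Vimag_Wsp (hS : InSp n S) {a b : Idx n → ℂ} (ha : a ∈ Vimag n S)
    (hb : b ∈ Wsp n S) : sigmaC n a b = 0 := by
  refine Submodule.iSup_induction (motive := fun a => sigmaC n a b = 0) _ ha ?_ ?_ ?_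
  · rintro ⟨μ, him⟩ x hxμ
    refine Submodule.iSup_induction (motive := fun b => sigmaC n x b = 0) _ hb ?_ ?_ ?_
    · rintro ⟨l, hl⟩ y hyl
      refine genEig_orth hS ?_ hxμ hyl
      intro hc
      apply him
      have : (μ + (l : ℂ)).im = 0 := by rw [hc]; rfl
      simpa using this
    · exact sigmaC_zero_right x
    · intro y1 y2 h1 h2
      show sigmaC n x (y1 + y2) = 0
      rw [sigmaC_add_right, h1, h2, add_zero]
  · exact sigmaC_zero_left b
  · intro x y hx hy
    show sigmaC n (x + y) b = 0
    rw [sigmaC_add_left, hx, hy, add_zero]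

lemma Vimag_le_range : Vimag n S ≤ LinearMap.range S.mulVecLin :=
  iSup_le fun μ => genEig_le_range (fun h => μ.2 (by rw [h]; rfl))


lemma mulVecLin_pow (M : Matrix (Idx n) (Idx n) ℂ) (k : ℕ) :
    (M.mulVecLin) ^ k = (M ^ k).mulVecLin := by
  induction k with
  | zero => rw [pow_zero, pow_zero, Matrix.mulVecLin_one]; rfl
  | succ k ih =>
    rw [pow_succ, pow_succ, ih, Matrix.mulVecLin_mul]
    rfl

lemma mulVec_Vreal {x : Idx n → ℂ} (hx : x ∈ Vreal n S) : S.mulVec x ∈ Vreal n S := by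
  refine Submodule.iSup_induction (motive := fun x => S.mulVec x ∈ Vreal n S) _ hx ?_ ?_ ?_
  · intro l x hxl
    exact Submodule.mem_iSup_of_mem l (mulVec_mem_genEig hxl)
  · show S.mulVec (0 : Idx n → ℂ) ∈ Vreal n S
    rw [mulVec_zero]; exact zero_mem _
  · intro a b ha hb
    show S.mulVec (a + b) ∈ Vreal n S
    rw [mulVec_add]; exact add_mem ha hb

/-- Key structural lemma: on `V_0(S)`, `S` squares to zero. -/
lemma V0_sq_zero {Sr Dr Nr : Matrix (Idx n) (Idx n) ℂ}
    (hSr : IsRealPart n S Sr) (hsum : Sr = Dr + Nr) (hD : IsSemisimpleMat n Dr)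
    (hcomm : Dr * Nr = Nr * Dr) (hN2 : Nr * Nr = 0)
    {u : Idx n → ℂ} (hu : u ∈ genEig n S 0) : S.mulVec (S.mulVec u) = 0 := by
  classical
  -- iterated powers of S stay in the generalized 0-eigenspace and agree with Sr
  have horb : ∀ j : ℕ, ((S.mulVecLin) ^ j) u ∈ genEig n S 0 ∧
      ((Sr.mulVecLin) ^ j) u = ((S.mulVecLin) ^ j) u := by
    intro j
    induction j with
    | zero => exact ⟨hu, rfl⟩
    | succ j ih =>
      constructor
      · rw [pow_succ', Module.End.mul_apply, Matrix.mulVecLin_apply]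
        exact mulVec_mem_genEig ih.1
      · rw [pow_succ', pow_succ', Module.End.mul_apply, Module.End.mul_apply, ih.2,
          Matrix.mulVecLin_apply, Matrix.mulVecLin_apply]
        exact hSr.1 _ (genEig_zero_le_Vreal ih.1)
  -- u lies in the generalized 0-eigenspace of Sr
  have huV : u ∈ Module.End.maxGenEigenspace (Sr.mulVecLin) 0 := by
    rw [genEig, Module.End.mem_maxGenEigenspace] at hu
    obtain ⟨k, hk⟩ := hu
    rw [Module.End.mem_maxGenEigenspace]
    refine ⟨k, ?_⟩
    simp only [zero_smul, sub_zero] at hk ⊢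
    rw [(horb k).2]
    exact hk
  set V := Module.End.maxGenEigenspace (Sr.mulVecLin) 0 with hV
  set k₀ := Module.finrank ℂ (Idx n → ℂ) with hk₀
  have hVbound : ∀ v ∈ V, ((Sr.mulVecLin) ^ k₀) v = 0 := by
    intro v hv
    rw [hV, Module.End.maxGenEigenspace_eq_genEigenspace_finrank] at hv
    rw [Module.End.mem_genEigenspace_nat] at hv
    simpa only [zero_smul, sub_zero, LinearMap.mem_ker] using hv
  have hSrN : Sr * Nr = Nr * Sr := by rw [hsum, add_mul, mul_add, hcomm]
  have hfcomm : Commute (Sr.mulVecLin) (Nr.mulVecLin) := by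
    show Sr.mulVecLin * Nr.mulVecLin = Nr.mulVecLin * Sr.mulVecLin
    rw [Module.End.mul_eq_comp, Module.End.mul_eq_comp, ← Matrix.mulVecLin_mul,
      ← Matrix.mulVecLin_mul, hSrN]
  have hNV : ∀ v ∈ V, Nr.mulVecLin v ∈ V :=
    fun v hv => Module.End.mapsTo_maxGenEigenspace_of_comm hfcomm 0 hv
  have hfN2 : (Nr.mulVecLin) * (Nr.mulVecLin) = 0 := by
    rw [Module.End.mul_eq_comp, ← Matrix.mulVecLin_mul, hN2, Matrix.mulVecLin_zero]
  -- binomial: Dr^(k₀+2) kills u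
  have hfd : Dr.mulVecLin = Sr.mulVecLin + -(Nr.mulVecLin) := by
    rw [hsum, Matrix.mulVecLin_add]; abel
  have hnegV : ∀ (j : ℕ) (v : Idx n → ℂ), v ∈ V → ((-(Nr.mulVecLin)) ^ j) v ∈ V := by
    intro j
    induction j with
    | zero => intro v hv; simpa using hv
    | succ j ih =>
      intro v hv
      rw [pow_succ', Module.End.mul_apply, LinearMap.neg_apply]
      exact neg_mem (hNV _ (ih v hv))
  have hDpow : ((Dr.mulVecLin) ^ (k₀ + 2)) u = 0 := by
    rw [hfd, Commute.add_pow hfcomm.neg_right, LinearMap.sum_apply]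
    refine Finset.sum_eq_zero ?_
    intro m hm
    rw [Finset.mem_range] at hm
    rw [Module.End.mul_apply, Module.End.mul_apply, Module.End.natCast_apply]
    rcases le_or_gt m k₀ with hmle | hmgt
    · have hj : k₀ + 2 - m = (k₀ + 2 - m - 2) + 2 := by omega
      have hzero : (-(Nr.mulVecLin)) ^ (k₀ + 2 - m) = 0 := by
        have h2 : (-(Nr.mulVecLin)) ^ 2 = 0 := by
          rw [neg_sq (R := Module.End ℂ (Idx n → ℂ)) Nr.mulVecLin, pow_two, hfN2]
        rw [hj, pow_add, h2, mul_zero]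
      rw [hzero, LinearMap.zero_apply, map_zero]
    · have hx : ((-(Nr.mulVecLin)) ^ (k₀ + 2 - m)) ((Nat.choose (k₀ + 2) m : ℕ) • u) ∈ V :=
        hnegV _ _ (nsmul_mem huV _)
      have hm0 := hVbound _ hx
      have hpowsplit : (Sr.mulVecLin) ^ m = (Sr.mulVecLin) ^ (m - k₀) * (Sr.mulVecLin) ^ k₀ := by
        rw [← pow_add]
        congr 1
        omega
      rw [hpowsplit, Module.End.mul_apply, hm0, map_zero]
  -- translate to matrices and use semisimplicity of Dr
  obtain ⟨P, d, hP, hDr⟩ := hD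
  have hDK : (Dr ^ (k₀ + 2)).mulVec u = 0 := by
    rw [← Matrix.mulVecLin_apply, ← mulVecLin_pow]
    exact hDpow
  have hdet : IsUnit P.det := (Matrix.isUnit_iff_isUnit_det P).mp hP
  have hPinv : P⁻¹ * P = 1 := Matrix.nonsing_inv_mul P hdet
  have hPinv' : P * P⁻¹ = 1 := Matrix.mul_nonsing_inv P hdet
  have hconjpow : ∀ k : ℕ,
      (P * Matrix.diagonal d * P⁻¹) ^ k = P * (Matrix.diagonal d) ^ k * P⁻¹ := by
    intro k
    induction k with
    | zero => rw [pow_zero, pow_zero, mul_one, hPinv']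
    | succ k ih =>
      rw [pow_succ, pow_succ, ih]
      calc P * Matrix.diagonal d ^ k * P⁻¹ * (P * Matrix.diagonal d * P⁻¹)
          = P * Matrix.diagonal d ^ k * (P⁻¹ * P) * (Matrix.diagonal d * P⁻¹) := by
            simp only [Matrix.mul_assoc]
        _ = P * (Matrix.diagonal d ^ k * Matrix.diagonal d) * P⁻¹ := by
            rw [hPinv, mul_one]
            simp only [Matrix.mul_assoc]
  set c := P⁻¹.mulVec u with hc
  have hX : ((Matrix.diagonal d) ^ (k₀ + 2)).mulVec c = 0 := by
    rw [hDr, hconjpow, ← Matrix.mulVec_mulVec, ← Matrix.mulVec_mulVec] at hDK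
    have h3 := congrArg (fun w => P⁻¹.mulVec w) hDK
    simp only [Matrix.mulVec_zero] at h3
    rw [Matrix.mulVec_mulVec, hPinv, Matrix.one_mulVec] at h3
    exact h3
  have hdc : ∀ j, d j * c j = 0 := by
    intro j
    have hXj := congrFun hX j
    rw [Matrix.diagonal_pow, Matrix.mulVec_diagonal] at hXj
    rw [Pi.pow_apply] at hXj
    rcases mul_eq_zero.mp hXj with h | h
    · rw [pow_eq_zero_iff (by omega : k₀ + 2 ≠ 0)] at h
      rw [h, zero_mul]
    · rw [h, mul_zero]
  have hdiag : (Matrix.diagonal d).mulVec c = 0 := by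
    funext j
    rw [Matrix.mulVec_diagonal]
    exact hdc j
  have hDu : Dr.mulVec u = 0 := by
    rw [hDr, ← Matrix.mulVec_mulVec, ← Matrix.mulVec_mulVec, ← hc, hdiag, Matrix.mulVec_zero]
  have hSru : Sr.mulVec u = Nr.mulVec u := by
    rw [hsum, Matrix.add_mulVec, hDu, zero_add]
  have hfin : Sr.mulVec (Sr.mulVec u) = 0 := by
    rw [hSru, Matrix.mulVec_mulVec, hSrN, ← Matrix.mulVec_mulVec, hSru,
      Matrix.mulVec_mulVec, hN2, Matrix.zero_mulVec]
  have h1 : Sr.mulVec u = S.mulVec u := hSr.1 u (genEig_zero_le_Vreal hu)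
  have h2 : Sr.mulVec (S.mulVec u) = S.mulVec (S.mulVec u) :=
    hSr.1 _ (genEig_zero_le_Vreal (mulVec_mem_genEig hu))
  rw [← h2, ← h1, hfin]

end Aux


/-- if `S` satisfies condition (R) and `N_r² = 0`, then `Re Q_S ≥ 0`
implies `Re Q_{S_r} ≥ 0`, i.e. `Re σ(z̄, S_r z) ≥ 0` for all `z ∈ ℂ^{2n}`. -/
theorem statement2 (n : ℕ) (S Sr Dr Nr : Matrix (Idx n) (Idx n) ℂ)
    (hS : InSp n S) (hSr : IsRealPart n S Sr)
    (hJ : IsJordanDecomp n Sr Dr Nr) (hN2 : Nr * Nr = 0)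
    (hR : CondR n S) (hpos : RePosQ n S) :
    ∀ z : Idx n → ℂ, 0 ≤ (sigmaC n (conjVec n z) (Sr.mulVec z)).re := by
  obtain ⟨hsum, hD, -, hcomm⟩ := hJ
  intro z
  obtain ⟨w, z0, zi, hw, hz0, hzi, rfl⟩ := Aux.decomp (S := S) z
  have hSrz : Sr.mulVec (w + z0 + zi) = S.mulVec w + S.mulVec z0 := by
    rw [mulVec_add, mulVec_add, hSr.1 w (Aux.Wsp_le_Vreal hw),
      hSr.1 z0 (Aux.genEig_zero_le_Vreal hz0), hSr.2 zi hzi, add_zero]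
  have hconj : conjVec n (w + z0 + zi) = conjVec n w + conjVec n z0 + conjVec n zi := by
    rw [Aux.conjVec_add, Aux.conjVec_add]
  rw [hSrz, hconj, Aux.sigmaC_add_left, Aux.sigmaC_add_left, Aux.sigmaC_add_right,
    Aux.sigmaC_add_right, Aux.sigmaC_add_right]
  have hconjSw : conjVec n (S.mulVec w) ∈ Wsp n S :=
    Aux.conj_Wsp hR (Aux.mulVec_Wsp hw)
  have T2 : sigmaC n (conjVec n w) (S.mulVec z0) = 0 :=
    Aux.sigma_Wsp_V0 hS (Aux.conj_Wsp hR hw) (Aux.mulVec_mem_genEig hz0)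
  have T3 : sigmaC n (conjVec n z0) (S.mulVec w) = 0 := by
    conv_lhs => rw [← Aux.conjVec_conjVec (S.mulVec w)]
    rw [Aux.sigmaC_conj, Aux.sigma_V0_Wsp hS hz0 hconjSw, map_zero]
  have T5 : sigmaC n (conjVec n zi) (S.mulVec w) = 0 := by
    conv_lhs => rw [← Aux.conjVec_conjVec (S.mulVec w)]
    rw [Aux.sigmaC_conj, Aux.sigma_Vimag_Wsp hS hzi hconjSw, map_zero]
  have T6 : sigmaC n (conjVec n zi) (S.mulVec z0) = 0 := by
    have hp : S.mulVec (S.mulVec z0) = 0 :=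
      Aux.V0_sq_zero hSr hsum hD hcomm hN2 hz0
    obtain ⟨y, hy⟩ := Aux.Vimag_le_range hzi
    rw [← hy, Matrix.mulVecLin_apply]
    exact Aux.ker_orth' hS hpos hp y
  simp only [T2, T3, T5, T6, add_zero, zero_add, Complex.add_re]
  exact add_nonneg (Aux.repos_ext hS hpos w) (Aux.repos_ext hS hpos z0)
end
end

section
/- Let S ∈ sp(n,ℂ) with Re Q_S ≥ 0. Then Re Q_{S_r} ≥ 0 (i.e. Re σ(z̄, S_r z) ≥ 0 for all z ∈ ℂ^{2n}) if and only if the complex conjugate of S(V_r) is contained in V_r. -/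
/-!
Since `S` is skew for `σ`, generalized eigenspaces `V_λ`, `V_μ` are `σ`-orthogonal unless
`λ + μ = 0`; hence `V_r ⊥ V_i`, and by nondegeneracy of `σ` a vector orthogonal to `V_i` lies in
`V_r`. For `z = z_r + z_i` one has `σ(z̄, S_r z) = σ(z̄_r, S z_r) + conj σ(z_i, conj (S z_r))`.
The first term has nonnegative real part because `Re Q_S ≥ 0` extends from real to complex
vectors, and the second vanishes when `conj (S z_r) ∈ V_r`. Conversely, if
`σ(ζ̄, S v) ≠ 0` for some `v ∈ V_r`, `ζ ∈ V_i`, then replacing `v` by `v + t ζ` for a suitable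
`t` makes the real part of `σ(z̄, S_r z)` negative.
-/

open MeasureTheory Complex Matrix

noncomputable section

theorem LinearMap.BilinForm.apply_eq_zero_of_mem_maxGenEigenspace {K V : Type*} [Field K]
    [AddCommGroup V] [Module K V] {B : LinearMap.BilinForm K V}
    {f : Module.End K V} (hf : LinearMap.IsSkewAdjoint B f) {a b : K} (hab : a + b ≠ 0)
    {x y : V} (hx : x ∈ f.maxGenEigenspace a) (hy : y ∈ f.maxGenEigenspace b) : B x y = 0 := by
  obtain ⟨k, hk⟩ := (Module.End.mem_maxGenEigenspace f a x).mp hx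
  obtain ⟨m, hm⟩ := (Module.End.mem_maxGenEigenspace f b y).mp hy
  clear hx hy
  -- `(a + b) B x y = -B ((f - a) x) y - B x ((f - b) y)`, and both terms vanish by induction
  induction k generalizing x m y with
  | zero => simp_all
  | succ k ihk =>
    induction m generalizing y with
    | zero => simp_all
    | succ m ihm =>
      have hx' : B ((f - a • 1) x) y = 0 := ihk (by rwa [pow_succ] at hk) _ hm
      have hy' : B x ((f - b • 1) y) = 0 := ihm (by rwa [pow_succ] at hm)
      have hskew : B (f x) y = -B x (f y) := by simpa using hf x y
      simp only [LinearMap.sub_apply, LinearMap.smul_apply, Module.End.one_apply, map_sub,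
        map_smul, smul_eq_mul] at hx' hy'
      have : (a + b) * B x y = 0 := by linear_combination hskew - hx' - hy'
      exact (mul_eq_zero.mp this).resolve_left hab

section SymplecticForm

variable {n : ℕ}

def sigmaForm (n : ℕ) : LinearMap.BilinForm ℂ (Idx n → ℂ) := Matrix.toLinearMap₂' ℂ (Jmat n)

theorem sigmaForm_apply (z w : Idx n → ℂ) : sigmaForm n z w = sigmaC n z w :=
  Matrix.toLinearMap₂'_apply' _ _ _

theorem Jmat_transpose : (Jmat n)ᵀ = -Jmat n := by
  simp [Jmat, Matrix.fromBlocks_transpose, Matrix.fromBlocks_neg]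

theorem Jmat_mul_Jmat : Jmat n * Jmat n = -1 := by
  ext (i | i) (j | j) <;> simp [Jmat, Matrix.fromBlocks_multiply, Matrix.one_apply]

theorem sigmaC_antisymm (z w : Idx n → ℂ) : sigmaC n z w = -sigmaC n w z := by
  rw [sigmaC, sigmaC, dotProduct_comm, Matrix.dotProduct_mulVec, ← Matrix.mulVec_transpose,
    Jmat_transpose, Matrix.neg_mulVec, neg_dotProduct, neg_neg]

theorem conjVec_conjVec (z : Idx n → ℂ) : conjVec n (conjVec n z) = z := by
  funext i; simp [conjVec]

theorem conjVec_add (z w : Idx n → ℂ) : conjVec n (z + w) = conjVec n z + conjVec n w := by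
  funext i; simp [conjVec]

theorem conjVec_smul (t : ℂ) (z : Idx n → ℂ) :
    conjVec n (t • z) = starRingEnd ℂ t • conjVec n z := by
  funext i; simp [conjVec]

theorem sigmaC_conjVec (z w : Idx n → ℂ) :
    sigmaC n (conjVec n z) (conjVec n w) = starRingEnd ℂ (sigmaC n z w) := by
  have hJ (i j : Idx n) : starRingEnd ℂ (Jmat n i j) = Jmat n i j := by
    rcases i with i | i <;> rcases j with j | j <;> simp [Jmat, Matrix.one_apply, apply_ite]
  simp only [sigmaC, conjVec, dotProduct, Matrix.mulVec, map_sum, map_mul, hJ]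

theorem sigmaForm_separatingRight : (sigmaForm n).SeparatingRight :=
  LinearMap.separatingRight_toLinearMap₂'_of_det_ne_zero'
    (Matrix.isUnit_det_of_left_inverse (B := -Jmat n) (by simp [Jmat_mul_Jmat])).ne_zero

theorem InSp.isSkewAdjoint {S : Matrix (Idx n) (Idx n) ℂ} (hS : InSp n S) :
    LinearMap.IsSkewAdjoint (sigmaForm n) S.mulVecLin := by
  have : Matrix.IsSkewAdjoint (Jmat n) S := by
    rw [Matrix.IsSkewAdjoint, Matrix.IsAdjointPair, Matrix.mul_neg, ← sub_eq_zero, sub_neg_eq_add]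
    exact hS
  rw [LinearMap.IsSkewAdjoint, ← Matrix.toLin'_apply', ← LinearMap.coe_neg, ← map_neg]
  exact (isAdjointPair_toLinearMap₂' _ _ _ _).mpr this

theorem InSp.sigmaC_mulVec_left {S : Matrix (Idx n) (Idx n) ℂ} (hS : InSp n S)
    (z w : Idx n → ℂ) : sigmaC n (S *ᵥ z) w = -sigmaC n z (S *ᵥ w) := by
  rw [← sigmaForm_apply, ← sigmaForm_apply, ← map_neg]
  exact hS.isSkewAdjoint z w

end SymplecticForm

section RealImaginarySplitting

variable {n : ℕ} {S : Matrix (Idx n) (Idx n) ℂ}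

theorem Vreal_sup_Vimag (S : Matrix (Idx n) (Idx n) ℂ) : Vreal n S ⊔ Vimag n S = ⊤ := by
  rw [eq_top_iff, ← Module.End.iSup_maxGenEigenspace_eq_top S.mulVecLin]
  refine iSup_le fun μ => ?_
  by_cases hμ : μ.im = 0
  · have hμre : ((μ.re : ℝ) : ℂ) = μ := Complex.ext rfl (by simp [hμ])
    exact le_sup_of_le_left (hμre ▸ le_iSup (fun lam : ℝ => genEig n S lam) μ.re)
  · exact le_sup_of_le_right (le_iSup (fun ν : {z : ℂ // z.im ≠ 0} => genEig n S ν) ⟨μ, hμ⟩)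

theorem exists_add_eq_of_mem_Vreal_Vimag (S : Matrix (Idx n) (Idx n) ℂ) (z : Idx n → ℂ) :
    ∃ zr ∈ Vreal n S, ∃ zi ∈ Vimag n S, zr + zi = z :=
  Submodule.mem_sup.mp (by simp [Vreal_sup_Vimag])

theorem InSp.sigmaC_eq_zero_of_mem_Vreal_of_mem_Vimag (hS : InSp n S) {u v : Idx n → ℂ}
    (hu : u ∈ Vreal n S) (hv : v ∈ Vimag n S) : sigmaC n u v = 0 := by
  have hreal (μ : {z : ℂ // z.im ≠ 0}) (w : Idx n → ℂ) (hw : w ∈ genEig n S μ) :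
      Vreal n S ≤ LinearMap.ker ((sigmaForm n).flip w) :=
    iSup_le fun lam x hx =>
      LinearMap.BilinForm.apply_eq_zero_of_mem_maxGenEigenspace hS.isSkewAdjoint
        (fun h => μ.2 (by simpa using congrArg Complex.im h)) hx hw
  have himag : Vimag n S ≤ LinearMap.ker (sigmaForm n u) :=
    iSup_le fun μ w hw => hreal μ w hw hu
  rw [← sigmaForm_apply]
  exact himag hv

theorem InSp.sigmaC_eq_zero_of_mem_Vimag_of_mem_Vreal (hS : InSp n S) {u v : Idx n → ℂ}
    (hu : u ∈ Vimag n S) (hv : v ∈ Vreal n S) : sigmaC n u v = 0 := by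
  rw [sigmaC_antisymm, hS.sigmaC_eq_zero_of_mem_Vreal_of_mem_Vimag hv hu, neg_zero]

theorem InSp.mem_Vreal_of_forall_sigmaC_eq_zero (hS : InSp n S) {w : Idx n → ℂ}
    (hw : ∀ ζ ∈ Vimag n S, sigmaC n ζ w = 0) : w ∈ Vreal n S := by
  obtain ⟨wr, hwr, wi, hwi, rfl⟩ := exists_add_eq_of_mem_Vreal_Vimag S w
  suffices wi = 0 by simpa [this] using hwr
  refine sigmaForm_separatingRight wi fun u => ?_
  obtain ⟨ur, hur, ui, hui, rfl⟩ := exists_add_eq_of_mem_Vreal_Vimag S u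
  have hui_wi : sigmaC n ui wi = 0 := by
    have := hw ui hui
    rwa [← sigmaForm_apply, map_add, sigmaForm_apply, sigmaForm_apply,
      hS.sigmaC_eq_zero_of_mem_Vimag_of_mem_Vreal hui hwr, zero_add] at this
  rw [map_add, LinearMap.add_apply, sigmaForm_apply, sigmaForm_apply, hui_wi,
    hS.sigmaC_eq_zero_of_mem_Vreal_of_mem_Vimag hur hwi, add_zero]

theorem IsRealPart.mulVec_add {Sr : Matrix (Idx n) (Idx n) ℂ} (hSr : IsRealPart n S Sr)
    {zr zi : Idx n → ℂ} (hzr : zr ∈ Vreal n S) (hzi : zi ∈ Vimag n S) :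
    Sr *ᵥ (zr + zi) = S *ᵥ zr := by
  rw [Matrix.mulVec_add, hSr.1 zr hzr, hSr.2 zi hzi, add_zero]

end RealImaginarySplitting

section Positivity

variable {n : ℕ} {S : Matrix (Idx n) (Idx n) ℂ}

theorem RePosQ.re_sigmaC_conjVec_nonneg (hS : InSp n S) (hpos : RePosQ n S)
    (z : Idx n → ℂ) : 0 ≤ (sigmaC n (conjVec n z) (S *ᵥ z)).re := by
  set a := realVec n fun i => (z i).re
  set b := realVec n fun i => (z i).im
  have hz : z = a + I • b := by
    ext i; simp [a, b, realVec, mul_comm I, Complex.re_add_im]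
  have hzc : conjVec n z = a - I • b := by
    funext i
    apply Complex.ext <;> simp [a, b, realVec, conjVec]
  have hcross : sigmaC n a (S *ᵥ b) = sigmaC n b (S *ᵥ a) := by
    rw [sigmaC_antisymm, hS.sigmaC_mulVec_left, neg_neg]
  have hsplit : sigmaC n (conjVec n z) (S *ᵥ z) = sigmaC n a (S *ᵥ a) + sigmaC n b (S *ᵥ b) := by
    rw [hzc, hz, ← sigmaForm_apply]
    simp only [Matrix.mulVec_add, Matrix.mulVec_smul, map_add, map_sub, map_smul,
      LinearMap.sub_apply, LinearMap.smul_apply, smul_eq_mul, sigmaForm_apply]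
    linear_combination I * hcross - sigmaC n b (S *ᵥ b) * I_sq
  rw [hsplit, add_re]
  exact add_nonneg (hpos _) (hpos _)

theorem Complex.eq_zero_of_forall_re_add_mul_nonneg {r : ℝ} {c : ℂ}
    (h : ∀ t : ℂ, 0 ≤ r + (t * c).re) : c = 0 := by
  by_contra hc
  have := h ((-1 - r) / c)
  rw [div_mul_cancel₀ _ hc] at this
  simp only [sub_re, neg_re, one_re, ofReal_re] at this
  linarith

theorem IsRealPart.sigmaC_conjVec_mulVec_eq_zero {Sr : Matrix (Idx n) (Idx n) ℂ}
    (hSr : IsRealPart n S Sr) (hQ : ∀ z, 0 ≤ (sigmaC n (conjVec n z) (Sr *ᵥ z)).re)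
    {v ζ : Idx n → ℂ} (hv : v ∈ Vreal n S) (hζ : ζ ∈ Vimag n S) :
    sigmaC n (conjVec n ζ) (S *ᵥ v) = 0 := by
  refine Complex.eq_zero_of_forall_re_add_mul_nonneg
    (r := (sigmaC n (conjVec n v) (S *ᵥ v)).re) fun t => ?_
  have := hQ (v + starRingEnd ℂ t • ζ)
  rwa [hSr.mulVec_add hv (Submodule.smul_mem _ _ hζ), ← sigmaForm_apply, conjVec_add,
    conjVec_smul, map_add, map_smul, LinearMap.add_apply, LinearMap.smul_apply, smul_eq_mul,
    sigmaForm_apply, sigmaForm_apply, Complex.conj_conj, add_re] at this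

end Positivity

/-- if `Re Q_S ≥ 0`, then `Re Q_{S_r} ≥ 0` holds if and only if the complex
conjugate of `S(V_r)` is contained in `V_r`. -/
theorem statement5 (n : ℕ) (S Sr : Matrix (Idx n) (Idx n) ℂ)
    (hS : InSp n S) (hpos : RePosQ n S) (hSr : IsRealPart n S Sr) :
    (∀ z : Idx n → ℂ, 0 ≤ (sigmaC n (conjVec n z) (Sr.mulVec z)).re) ↔
      ∀ v ∈ Vreal n S, conjVec n (S.mulVec v) ∈ Vreal n S := by
  constructor
  · intro hQ v hv
    refine hS.mem_Vreal_of_forall_sigmaC_eq_zero fun ζ hζ => ?_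
    rw [← conjVec_conjVec ζ, sigmaC_conjVec, hSr.sigmaC_conjVec_mulVec_eq_zero hQ hv hζ, map_zero]
  · intro hR z
    obtain ⟨zr, hzr, zi, hzi, rfl⟩ := exists_add_eq_of_mem_Vreal_Vimag S z
    have hcross : sigmaC n (conjVec n zi) (S *ᵥ zr) = 0 := by
      rw [← conjVec_conjVec (S *ᵥ zr), sigmaC_conjVec,
        hS.sigmaC_eq_zero_of_mem_Vimag_of_mem_Vreal hzi (hR zr hzr), map_zero]
    rw [hSr.mulVec_add hzr hzi, conjVec_add, ← sigmaForm_apply, map_add, LinearMap.add_apply,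
      sigmaForm_apply, sigmaForm_apply, hcross, add_zero]
    exact hpos.re_sigmaC_conjVec_nonneg hS zr
end
end

section
/- Let S ∈ sp(n,ℂ) with Re Q_S ≥ 0, and let N_r be the nilpotent part in the Jordan decomposition of S_r. If N_r² = 0, then Re Q_{N_r} ≥ 0, i.e. Re σ(z̄, N_r z) ≥ 0 for all z ∈ ℂ^{2n}. (No self-conjugacy assumption on the spaces V_λ ⊕ V_{−λ} is needed.) -/
open MeasureTheory Complex Matrix

noncomputable section

namespace St6Aux

variable {n : ℕ}

lemma Jmat_tr (n : ℕ) : (Jmat n)ᵀ = -(Jmat n) := by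
  simp [Jmat, Matrix.fromBlocks_transpose, Matrix.fromBlocks_neg]

lemma Jmat_real (n : ℕ) (i j : Idx n) : star (Jmat n i j) = Jmat n i j := by
  rcases i with i | i <;> rcases j with j | j <;>
    simp [Jmat, Matrix.fromBlocks, Matrix.one_apply]

/-- the sesquilinear pairing g(a,b) = σ(ā, b) -/
def gg (n : ℕ) (a b : Idx n → ℂ) : ℂ := sigmaC n (conjVec n a) b

lemma gg_eq_sum (a b : Idx n → ℂ) :
    gg n a b = ∑ i, ∑ j, star (a i) * (Jmat n i j * b j) := by
  rw [gg, sigmaC, dotProduct]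
  refine Finset.sum_congr rfl fun i _ => ?_
  rw [Matrix.mulVec, dotProduct, Finset.mul_sum]
  rfl

lemma gg_conj (a b : Idx n → ℂ) : star (gg n a b) = -gg n b a := by
  rw [gg_eq_sum a b, gg_eq_sum b a]
  rw [show (star (∑ i, ∑ j, star (a i) * (Jmat n i j * b j)) : ℂ)
      = ∑ i, ∑ j, a i * (Jmat n i j * star (b j)) by
    simp [star_sum, Jmat_real]]
  rw [Finset.sum_comm, ← Finset.sum_neg_distrib]
  refine Finset.sum_congr rfl fun j _ => ?_
  rw [← Finset.sum_neg_distrib]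
  refine Finset.sum_congr rfl fun i _ => ?_
  have h1 : Jmat n i j = -(Jmat n j i) := by
    have := congrFun (congrFun (Jmat_tr n) j) i
    simpa [Matrix.transpose_apply] using this
  rw [h1]; ring



variable {n : ℕ}


lemma gg_add_left (a a' b : Idx n → ℂ) : gg n (a + a') b = gg n a b + gg n a' b := by
  simp [gg, sigmaC, conjVec, dotProduct, add_mul, Finset.sum_add_distrib]

lemma gg_add_right (a b b' : Idx n → ℂ) : gg n a (b + b') = gg n a b + gg n a b' := by
  simp [gg, sigmaC, Matrix.mulVec_add, dotProduct_add]

lemma gg_smul_left (c : ℂ) (a b : Idx n → ℂ) : gg n (c • a) b = star c * gg n a b := by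
  simp [gg, sigmaC, conjVec, dotProduct, Finset.mul_sum, mul_assoc]
  rw [mul_add, Finset.mul_sum, Finset.mul_sum]

lemma gg_smul_right (c : ℂ) (a b : Idx n → ℂ) : gg n a (c • b) = c * gg n a b := by
  simp [gg, sigmaC, Matrix.mulVec_smul, dotProduct_smul, smul_eq_mul]

lemma gg_zero_left (b : Idx n → ℂ) : gg n 0 b = 0 := by
  simp [gg, sigmaC, conjVec, dotProduct]

lemma gg_zero_right (a : Idx n → ℂ) : gg n a 0 = 0 := by
  simp [gg, sigmaC, Matrix.mulVec_zero, dotProduct_zero]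

lemma gg_sub_left (a a' b : Idx n → ℂ) : gg n (a - a') b = gg n a b - gg n a' b := by
  have := gg_add_left (a - a') a' b; rw [sub_add_cancel] at this
  rw [this]; ring

lemma gg_sub_right (a b b' : Idx n → ℂ) : gg n a (b - b') = gg n a b - gg n a b' := by
  have := gg_add_right a (b - b') b'; rw [sub_add_cancel] at this
  rw [this]; ring

lemma gg_sum_left {ι : Type*} (s : Finset ι) (y : ι → (Idx n → ℂ)) (b : Idx n → ℂ) :
    gg n (∑ i ∈ s, y i) b = ∑ i ∈ s, gg n (y i) b := by
  induction s using Finset.cons_induction_on with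
  | empty => simpa using gg_zero_left b
  | cons _ _ h ih => simp [Finset.sum_cons, gg_add_left, ih]

lemma gg_sum_right {ι : Type*} (s : Finset ι) (a : Idx n → ℂ) (y : ι → (Idx n → ℂ)) :
    gg n a (∑ i ∈ s, y i) = ∑ i ∈ s, gg n a (y i) := by
  induction s using Finset.cons_induction_on with
  | empty => simpa using gg_zero_right a
  | cons _ _ h ih => simp [Finset.sum_cons, gg_add_right, ih]

variable {S : Matrix (Idx n) (Idx n) ℂ}

lemma JS_symm (hS : InSp n S) : (Jmat n * S)ᵀ = Jmat n * S := by
  have h : Sᵀ * Jmat n = -(Jmat n * S) := by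
    have h2 := hS; rw [InSp] at h2
    have := congrArg (fun M => M - Jmat n * S) h2
    simpa [add_sub_cancel_right, zero_sub] using this
  calc (Jmat n * S)ᵀ = Sᵀ * (Jmat n)ᵀ := Matrix.transpose_mul _ _
    _ = Sᵀ * (-(Jmat n)) := by rw [Jmat_tr]
    _ = -(Sᵀ * Jmat n) := by rw [Matrix.mul_neg]
    _ = Jmat n * S := by rw [h, neg_neg]

lemma sigma_S_symm (hS : InSp n S) (u v : Idx n → ℂ) :
    sigmaC n u (S.mulVec v) = sigmaC n v (S.mulVec u) := by
  have e : ∀ w x : Idx n → ℂ, sigmaC n w (S.mulVec x) = w ⬝ᵥ (Jmat n * S).mulVec x := by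
    intro w x; rw [sigmaC, Matrix.mulVec_mulVec]
  rw [e, e]
  calc u ⬝ᵥ (Jmat n * S).mulVec v
      = Matrix.vecMul u (Jmat n * S) ⬝ᵥ v := dotProduct_mulVec _ _ _
    _ = ((Jmat n * S)ᵀ.mulVec u) ⬝ᵥ v := by rw [← Matrix.mulVec_transpose]
    _ = ((Jmat n * S).mulVec u) ⬝ᵥ v := by rw [JS_symm hS]
    _ = v ⬝ᵥ (Jmat n * S).mulVec u := dotProduct_comm _ _



variable {n : ℕ} {S : Matrix (Idx n) (Idx n) ℂ}


lemma Hpos (hS : InSp n S) (hpos : RePosQ n S) (z : Idx n → ℂ) :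
    0 ≤ (gg n z (S.mulVec z)).re := by
  set x : Idx n → ℝ := fun i => (z i).re with hx
  set y : Idx n → ℝ := fun i => (z i).im with hy
  have hz : z = realVec n x + Complex.I • realVec n y := by
    funext i
    simp [realVec, hx, hy, Complex.ext_iff]
  have hcz : conjVec n z = realVec n x + (-Complex.I) • realVec n y := by
    funext i
    simp [conjVec, realVec, hx, hy, Complex.ext_iff]
  have key : gg n z (S.mulVec z) =
      sigmaC n (realVec n x) (S.mulVec (realVec n x)) +
      sigmaC n (realVec n y) (S.mulVec (realVec n y)) +
      Complex.I * (sigmaC n (realVec n x) (S.mulVec (realVec n y)) -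
        sigmaC n (realVec n y) (S.mulVec (realVec n x))) := by
    rw [gg]
    conv_lhs => rw [hcz, hz]
    rw [Matrix.mulVec_add, Matrix.mulVec_smul]
    simp only [sigmaC, Matrix.mulVec_add, Matrix.mulVec_smul, dotProduct_add,
      dotProduct_smul, add_dotProduct, smul_dotProduct, smul_eq_mul]
    ring_nf
    simp only [Complex.I_sq]
    ring
  rw [key, sigma_S_symm hS (realVec n x) (realVec n y)]
  simp only [sub_self, mul_zero, add_zero, Complex.add_re]
  exact add_nonneg (hpos x) (hpos y)

/-- Hermitian form h(a,b) = g(a,Sb) - g(Sa,b) -/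
def hf (n : ℕ) (S : Matrix (Idx n) (Idx n) ℂ) (a b : Idx n → ℂ) : ℂ :=
  gg n a (S.mulVec b) - gg n (S.mulVec a) b

lemma hf_herm (a b : Idx n → ℂ) : star (hf n S a b) = hf n S b a := by
  rw [hf, hf, star_sub, gg_conj, gg_conj]; ring

lemma hf_diag (hS : InSp n S) (hpos : RePosQ n S) (z : Idx n → ℂ) :
    hf n S z z = (2 * (gg n z (S.mulVec z)).re : ℝ) := by
  have h1 : -gg n (S.mulVec z) z = star (gg n z (S.mulVec z)) := by rw [gg_conj]
  rw [hf, sub_eq_add_neg, h1, Complex.star_def, Complex.add_conj]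

lemma hf_diag_nonneg (hS : InSp n S) (hpos : RePosQ n S) (z : Idx n → ℂ) :
    0 ≤ (hf n S z z).re := by
  rw [hf_diag hS hpos]
  simp only [Complex.ofReal_re]
  linarith [Hpos hS hpos z]

lemma hf_add_left (a a' b : Idx n → ℂ) : hf n S (a + a') b = hf n S a b + hf n S a' b := by
  simp [hf, Matrix.mulVec_add, gg_add_left]; ring

lemma hf_add_right (a b b' : Idx n → ℂ) : hf n S a (b + b') = hf n S a b + hf n S a b' := by
  simp [hf, Matrix.mulVec_add, gg_add_right]; ring

lemma hf_smul_left (c : ℂ) (a b : Idx n → ℂ) : hf n S (c • a) b = star c * hf n S a b := by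
  simp [hf, Matrix.mulVec_smul, gg_smul_left]; ring

lemma hf_smul_right (c : ℂ) (a b : Idx n → ℂ) : hf n S a (c • b) = c * hf n S a b := by
  simp [hf, Matrix.mulVec_smul, gg_smul_right]; ring

/-- Cauchy-Schwarz style kernel lemma -/
lemma hf_zero_of_diag_zero (hS : InSp n S) (hpos : RePosQ n S)
    {w : Idx n → ℂ} (hw : hf n S w w = 0) (x : Idx n → ℂ) : hf n S x w = 0 := by
  set c := hf n S x w with hc
  by_contra hne
  have hnsq : 0 < Complex.normSq c := by
    rcases (Complex.normSq_pos (z := c)).mpr hne with h; exact h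
  set s : ℝ := ((hf n S x x).re) / (2 * Complex.normSq c) + 1 with hs
  have hkey : ∀ t : ℂ, 0 ≤ (hf n S x x).re + 2 * (t * c).re := by
    intro t
    have expand : hf n S (x + t • w) (x + t • w)
        = hf n S x x + t * c + star t * star c + star t * t * hf n S w w := by
      rw [hf_add_left, hf_add_right, hf_add_right, hf_smul_left, hf_smul_right,
        hf_smul_left, hf_smul_right]
      have : hf n S w x = star c := by rw [← hf_herm]
      rw [this, hw]; try ring
    have pos := hf_diag_nonneg hS hpos (x + t • w)
    rw [expand, hw] at pos
    have : (t * c + star (t * c)).re = 2 * (t * c).re := by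
      rw [Complex.star_def, Complex.add_conj]; simp
    simp only [mul_zero, add_zero, Complex.add_re] at pos
    rw [star_mul'] at this
    calc (0:ℝ) ≤ _ := pos
      _ = (hf n S x x).re + 2 * (t * c).re := by
          rw [← Complex.add_re, ← this, Complex.add_re, Complex.add_re]; ring
  have h2 := hkey (-(s:ℂ) * star c)
  have hstar : ((-(s:ℂ) * star c) * c).re = -s * Complex.normSq c := by
    have : (-(s:ℂ) * star c) * c = -(s:ℂ) * (Complex.normSq c : ℝ) := by
      rw [mul_assoc]
      congr 1
      rw [mul_comm]; exact Complex.mul_conj c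
    rw [this]; simp
  rw [hstar] at h2
  have hlt : (hf n S x x).re + 2 * (-s * Complex.normSq c) < 0 := by
    rw [hs]
    have h3 : ((hf n S x x).re / (2 * Complex.normSq c) + 1) * (2 * Complex.normSq c)
        = (hf n S x x).re + 2 * Complex.normSq c := by
      field_simp
    nlinarith [hnsq]
  linarith






variable {n : ℕ} {S : Matrix (Idx n) (Idx n) ℂ}

lemma pow_mulVecLin (M : Matrix (Idx n) (Idx n) ℂ) (k : ℕ) :
    (Matrix.mulVecLin M)^k = Matrix.mulVecLin (M^k) := by
  induction k with
  | zero => rw [pow_zero, pow_zero, Matrix.mulVecLin_one]; rfl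
  | succ m ih => rw [pow_succ, pow_succ, Matrix.mulVecLin_mul, ih]; rfl

lemma mem_genEig_iff {μ : ℂ} {b : Idx n → ℂ} :
    b ∈ genEig n S μ ↔ ∃ k : ℕ, ((S - μ • 1)^k).mulVec b = 0 := by
  rw [genEig, Module.End.mem_maxGenEigenspace]
  have he : Matrix.mulVecLin S - μ • (1 : Module.End ℂ (Idx n → ℂ))
      = Matrix.mulVecLin (S - μ • 1) := by
    refine LinearMap.ext fun v => ?_
    rw [LinearMap.sub_apply, LinearMap.smul_apply, Module.End.one_apply,
      Matrix.mulVecLin_apply, Matrix.mulVecLin_apply, Matrix.sub_mulVec,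
      Matrix.smul_mulVec, Matrix.one_mulVec]
  rw [he]
  constructor
  · rintro ⟨k, hk⟩
    refine ⟨k, ?_⟩
    rw [pow_mulVecLin, Matrix.mulVecLin_apply] at hk
    exact hk
  · rintro ⟨k, hk⟩
    refine ⟨k, ?_⟩
    rw [pow_mulVecLin, Matrix.mulVecLin_apply]
    exact hk



variable {n : ℕ} {S Sr Dr Nr : Matrix (Idx n) (Idx n) ℂ}




/-- (S - μ)^k commutes with (S - c) -/
lemma commute_aux (μ c : ℂ) (k : ℕ) :
    ((S - μ • 1)^k) * (S - c • 1) = (S - c • 1) * ((S - μ • 1)^k) := by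
  have h : Commute (S - μ • 1) (S - c • 1) := by
    have h1 : S - c • 1 = (S - μ • 1) + (μ - c) • 1 := by
      rw [sub_smul]; abel
    rw [h1]
    refine Commute.add_right (Commute.refl _) ?_
    unfold Commute SemiconjBy
    rw [Matrix.mul_smul, Matrix.smul_mul, Matrix.mul_one, Matrix.one_mul]
  exact (h.pow_left k).eq

lemma genEig_invariant {μ c : ℂ} {b : Idx n → ℂ} (hb : b ∈ genEig n S μ) :
    (S - c • 1).mulVec b ∈ genEig n S μ := by
  rw [mem_genEig_iff] at hb ⊢
  obtain ⟨k, hk⟩ := hb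
  refine ⟨k, ?_⟩
  rw [Matrix.mulVec_mulVec, commute_aux, ← Matrix.mulVec_mulVec, hk, Matrix.mulVec_zero]

lemma genEig_S_invariant {μ : ℂ} {b : Idx n → ℂ} (hb : b ∈ genEig n S μ) :
    S.mulVec b ∈ genEig n S μ := by
  have := genEig_invariant (c := 0) hb
  simpa using this

lemma genEig_le_Vreal {μ : ℂ} (him : μ.im = 0) : genEig n S μ ≤ Vreal n S := by
  have hμ : ((μ.re : ℝ) : ℂ) = μ := by
    apply Complex.ext <;> simp [him]
  have := le_iSup (fun lam : ℝ => genEig n S (lam : ℂ)) μ.re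
  rw [hμ] at this
  exact this

lemma genEig_le_Vimag {μ : ℂ} (him : μ.im ≠ 0) : genEig n S μ ≤ Vimag n S :=
  le_iSup (fun μ' : {z : ℂ // z.im ≠ 0} => genEig n S (μ' : ℂ)) ⟨μ, him⟩

/-- On a generalized eigenspace of `Sr`, the semisimple part `Dr` acts as the scalar. -/
lemma Dr_scalar (hJ : IsJordanDecomp n Sr Dr Nr) (hN2 : Nr * Nr = 0)
    (c : ℂ) (x : Idx n → ℂ) (k : ℕ) (hx : ((Sr - c • 1)^k).mulVec x = 0) :
    Dr.mulVec x = c • x := by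
  obtain ⟨hSum, ⟨P, d, hP, hD⟩, _, hcomm⟩ := hJ
  obtain ⟨A, hA⟩ : ∃ A, A = Sr - c • 1 := ⟨_, rfl⟩
  obtain ⟨M, hM⟩ : ∃ M, M = Dr - c • 1 := ⟨_, rfl⟩
  rw [← hA] at hx
  have hAB : A * Nr = Nr * A := by
    have hSrN : Sr * Nr = Nr * Sr := by
      rw [hSum, Matrix.add_mul, Matrix.mul_add, hcomm]
    rw [hA, Matrix.sub_mul, Matrix.mul_sub, hSrN, Matrix.smul_mul, Matrix.mul_smul,
      Matrix.one_mul, Matrix.mul_one]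
  have hApowB : ∀ m : ℕ, (A^m) * Nr = Nr * (A^m) := fun m =>
    ((Commute.pow_left hAB m).eq)
  have hMAB : M = A - Nr := by rw [hM, hA, hSum]; abel
  have hx1 : ((A^(k+1))).mulVec x = 0 := by
    rw [pow_succ', ← Matrix.mulVec_mulVec, hx, Matrix.mulVec_zero]
  have hMM : M * M = A*A - A*Nr - Nr*A := by
    have h0 : M * M = A*A - A*Nr - Nr*A + Nr*Nr := by
      rw [hMAB, Matrix.sub_mul, Matrix.mul_sub, Matrix.mul_sub]; abel
    rw [h0, hN2, add_zero]
  have main : ∀ m : ℕ, ∀ v : Idx n → ℂ, (A^m).mulVec v = 0 → ((M*M)^m).mulVec v = 0 := by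
    intro m
    induction m with
    | zero => intro v hv; simpa using hv
    | succ m ih =>
        intro v hv
        have hmat : (A^m) * (M*M) = A*A^(m+1) - Nr*A^(m+1) - Nr*A^(m+1) := by
          rw [hMM, Matrix.mul_sub, Matrix.mul_sub]
          have e1 : A^m * (A*A) = A*A^(m+1) := by
            rw [← mul_assoc, ← pow_succ, ← pow_succ, ← pow_succ']
          have e2 : A^m * (A*Nr) = Nr*A^(m+1) := by
            rw [← mul_assoc, ← pow_succ, hApowB]
          have e3 : A^m * (Nr*A) = Nr*A^(m+1) := by
            rw [← mul_assoc, hApowB, mul_assoc, ← pow_succ]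
          rw [e1, e2, e3]
        have hkey : (A^m).mulVec ((M*M).mulVec v) = 0 := by
          rw [Matrix.mulVec_mulVec, hmat, Matrix.sub_mulVec, Matrix.sub_mulVec,
            ← Matrix.mulVec_mulVec, ← Matrix.mulVec_mulVec, hv]
          simp [Matrix.mulVec_zero]
        have hres := ih _ hkey
        rw [pow_succ, ← Matrix.mulVec_mulVec]
        exact hres
  have hMk : ((M*M)^(k+1)).mulVec x = 0 := main (k+1) x hx1
  -- diagonalize
  have hPdet : IsUnit P.det := (Matrix.isUnit_iff_isUnit_det P).mp hP
  have hPPinv : P * P⁻¹ = 1 := Matrix.mul_nonsing_inv P hPdet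
  have hPinvP : P⁻¹ * P = 1 := Matrix.nonsing_inv_mul P hPdet
  have hMdiag : M = P * Matrix.diagonal (fun i => d i - c) * P⁻¹ := by
    have hc1 : (c • (1 : Matrix (Idx n) (Idx n) ℂ)) = P * (c • 1) * P⁻¹ := by
      rw [Matrix.mul_smul, Matrix.mul_one, Matrix.smul_mul, hPPinv]
    have hdiag : Matrix.diagonal d - c • 1 = Matrix.diagonal (fun i => d i - c) := by
      ext i j
      rcases eq_or_ne i j with h | h
      · subst h
        simp [Matrix.diagonal_apply_eq, Matrix.one_apply_eq]
      · simp [Matrix.diagonal_apply_ne _ h, Matrix.one_apply_ne h]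
    rw [hM, hD]
    conv_lhs => rw [hc1]
    rw [← Matrix.sub_mul, ← Matrix.mul_sub, hdiag]
  have hconj : ∀ m : ℕ, (P * Matrix.diagonal (fun i => d i - c) * P⁻¹)^m
      = P * Matrix.diagonal ((fun i => d i - c)^m) * P⁻¹ := by
    intro m
    induction m with
    | zero =>
        rw [pow_zero, pow_zero]
        show (1 : Matrix (Idx n) (Idx n) ℂ) = P * Matrix.diagonal (fun _ => (1:ℂ)) * P⁻¹
        rw [Matrix.diagonal_one, Matrix.mul_one, hPPinv]
    | succ m ih =>
        have hPX : ∀ X : Matrix (Idx n) (Idx n) ℂ, P⁻¹ * (P * X) = X := by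
          intro X; rw [← Matrix.mul_assoc, hPinvP, Matrix.one_mul]
        have hd : Matrix.diagonal ((fun i => d i - c)^(m+1))
            = Matrix.diagonal ((fun i => d i - c)^m) * Matrix.diagonal (fun i => d i - c) := by
          rw [Matrix.diagonal_mul_diagonal]
          congr 1
          try (funext i; simp [pow_succ])
        rw [pow_succ, ih, hd]
        simp only [Matrix.mul_assoc]
        rw [hPX]
  -- finish: pointwise
  have hMpow : (M^(2*(k+1))).mulVec x = 0 := by
    have : M^(2*(k+1)) = (M*M)^(k+1) := by
      rw [pow_mul, pow_two]
    rw [this]; exact hMk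
  have hXdiag : (P * Matrix.diagonal ((fun i => d i - c)^(2*(k+1))) * P⁻¹).mulVec x = 0 := by
    rw [← hconj, ← hMdiag]; exact hMpow
  obtain ⟨y, hy⟩ : ∃ y, y = P⁻¹.mulVec x := ⟨_, rfl⟩
  have hPinj : ∀ u : Idx n → ℂ, P.mulVec u = 0 → u = 0 := by
    intro u hu
    have : (P⁻¹ * P).mulVec u = P⁻¹.mulVec (P.mulVec u) := by
      rw [Matrix.mulVec_mulVec]
    rw [hPinvP, Matrix.one_mulVec, hu, Matrix.mulVec_zero] at this
    exact this
  have hdiagy : (Matrix.diagonal ((fun i => d i - c)^(2*(k+1)))).mulVec y = 0 := by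
    apply hPinj
    rw [hy, Matrix.mulVec_mulVec, Matrix.mulVec_mulVec]
    exact hXdiag
  have hentry : ∀ i, (d i - c) * y i = 0 := by
    intro i
    have h0 := congrFun hdiagy i
    rw [Matrix.mulVec_diagonal] at h0
    have h1 : ((d i - c)^(2*(k+1))) * y i = 0 := by simpa using h0
    rcases mul_eq_zero.mp h1 with h2 | h2
    · rw [pow_eq_zero_iff (by norm_num : 2*(k+1) ≠ 0)] at h2
      rw [h2, zero_mul]
    · rw [h2, mul_zero]
  have hMx : M.mulVec x = 0 := by
    have hzero : (Matrix.diagonal (fun i => d i - c)).mulVec y = 0 := by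
      funext i
      simp [Matrix.mulVec_diagonal, hentry i]
    rw [hMdiag, ← Matrix.mulVec_mulVec, ← Matrix.mulVec_mulVec, ← hy, hzero, Matrix.mulVec_zero]
  have hfin : Dr.mulVec x - c • x = 0 := by
    rw [← hMx, hM, Matrix.sub_mulVec, Matrix.smul_mulVec, Matrix.one_mulVec]
  exact sub_eq_zero.mp hfin



variable {n : ℕ} {S Sr Dr Nr : Matrix (Idx n) (Idx n) ℂ}

lemma Sr_pow_eq (hSr : IsRealPart n S Sr) {lam : ℂ} (him : lam.im = 0) :
    ∀ (j : ℕ) (b : Idx n → ℂ), b ∈ genEig n S lam →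
      ((Sr - lam • 1)^j).mulVec b = ((S - lam • 1)^j).mulVec b := by
  intro j
  induction j with
  | zero => intro b _; simp [Matrix.one_mulVec]
  | succ j ih =>
      intro b hb
      have hstep : (Sr - lam • 1).mulVec b = (S - lam • 1).mulVec b := by
        rw [Matrix.sub_mulVec, Matrix.sub_mulVec, hSr.1 b (genEig_le_Vreal him hb)]
      rw [pow_succ, pow_succ, ← Matrix.mulVec_mulVec, ← Matrix.mulVec_mulVec, hstep,
        ih _ (genEig_invariant hb)]

lemma Nr_real (hSr : IsRealPart n S Sr) (hJ : IsJordanDecomp n Sr Dr Nr) (hN2 : Nr * Nr = 0)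
    {lam : ℂ} (him : lam.im = 0) {b : Idx n → ℂ} (hb : b ∈ genEig n S lam) :
    Nr.mulVec b = (S - lam • 1).mulVec b := by
  obtain ⟨k, hk⟩ := mem_genEig_iff.mp hb
  have hSrk : ((Sr - lam • 1)^k).mulVec b = 0 := by
    rw [Sr_pow_eq hSr him k b hb]; exact hk
  have hDr : Dr.mulVec b = lam • b := Dr_scalar hJ hN2 lam b k hSrk
  have hNr : Nr = Sr - Dr := by rw [hJ.1]; abel
  rw [hNr, Matrix.sub_mulVec, hSr.1 b (genEig_le_Vreal him hb), hDr,
    Matrix.sub_mulVec, Matrix.smul_mulVec, Matrix.one_mulVec]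

lemma Nr_imag (hSr : IsRealPart n S Sr) (hJ : IsJordanDecomp n Sr Dr Nr) (hN2 : Nr * Nr = 0)
    {lam : ℂ} (him : lam.im ≠ 0) {b : Idx n → ℂ} (hb : b ∈ genEig n S lam) :
    Nr.mulVec b = 0 := by
  have hSrb : Sr.mulVec b = 0 := hSr.2 b (genEig_le_Vimag him hb)
  have h0 : ((Sr - (0:ℂ) • 1)^1).mulVec b = 0 := by
    simpa [hSrb] using hSrb
  have hDr : Dr.mulVec b = (0:ℂ) • b := Dr_scalar hJ hN2 0 b 1 h0
  have hNr : Nr = Sr - Dr := by rw [hJ.1]; abel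
  rw [hNr, Matrix.sub_mulVec, hSrb, hDr, zero_smul, sub_zero]

lemma Sw_eq (hSr : IsRealPart n S Sr) (hJ : IsJordanDecomp n Sr Dr Nr) (hN2 : Nr * Nr = 0)
    {lam : ℂ} (him : lam.im = 0) {b : Idx n → ℂ} (hb : b ∈ genEig n S lam) :
    S.mulVec (Nr.mulVec b) = lam • (Nr.mulVec b) := by
  have hw : Nr.mulVec b = (S - lam • 1).mulVec b := Nr_real hSr hJ hN2 him hb
  have hwmem : Nr.mulVec b ∈ genEig n S lam := by rw [hw]; exact genEig_invariant hb
  have hNw : Nr.mulVec (Nr.mulVec b) = 0 := by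
    rw [Matrix.mulVec_mulVec, hN2, Matrix.zero_mulVec]
  have h2 : (S - lam • 1).mulVec (Nr.mulVec b) = 0 := by
    rw [← Nr_real hSr hJ hN2 him hwmem]; exact hNw
  rw [Matrix.sub_mulVec, Matrix.smul_mulVec, Matrix.one_mulVec, sub_eq_zero] at h2
  exact h2

/-- the central vanishing lemma -/
lemma key_vanish (hS : InSp n S) (hpos : RePosQ n S)
    (hSr : IsRealPart n S Sr) (hJ : IsJordanDecomp n Sr Dr Nr) (hN2 : Nr * Nr = 0)
    {lam : ℂ} (him : lam.im = 0) {b : Idx n → ℂ} (hb : b ∈ genEig n S lam)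
    {μ : ℂ} (hμ : star μ ≠ lam) {a : Idx n → ℂ} (ha : a ∈ genEig n S μ) :
    gg n a (Nr.mulVec b) = 0 := by
  obtain ⟨w, hwdef⟩ : ∃ w, w = Nr.mulVec b := ⟨_, rfl⟩
  have hSw : S.mulVec w = lam • w := by rw [hwdef]; exact Sw_eq hSr hJ hN2 him hb
  have hlam : star lam = lam := by
    rw [Complex.star_def, Complex.conj_eq_iff_im]; exact him
  have hww : hf n S w w = 0 := by
    rw [hf, hSw, gg_smul_right, gg_smul_left, hlam]; ring
  have hxw : ∀ x, hf n S x w = 0 := hf_zero_of_diag_zero hS hpos hww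
  have hgS : ∀ x, gg n (S.mulVec x) w = lam * gg n x w := by
    intro x
    have := hxw x
    rw [hf, hSw, gg_smul_right, sub_eq_zero] at this
    exact this.symm
  have hgpow : ∀ (j : ℕ) (x : Idx n → ℂ),
      gg n (((S - μ • 1)^j).mulVec x) w = (lam - star μ)^j * gg n x w := by
    intro j
    induction j with
    | zero => intro x; simp [Matrix.one_mulVec]
    | succ j ih =>
        intro x
        have hstep : gg n ((S - μ • 1).mulVec x) w = (lam - star μ) * gg n x w := by
          rw [Matrix.sub_mulVec, Matrix.smul_mulVec, Matrix.one_mulVec,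
            gg_sub_left, gg_smul_left, hgS]
          ring
        rw [pow_succ, ← Matrix.mulVec_mulVec, ih, hstep]
        ring
  obtain ⟨k, hk⟩ := mem_genEig_iff.mp ha
  have h0 : (0:ℂ) = (lam - star μ)^k * gg n a w := by
    rw [← hgpow k a, hk, gg_zero_left]
  have hne : (lam - star μ) ≠ 0 := sub_ne_zero.mpr (fun h => hμ h.symm)
  have := (mul_eq_zero.mp h0.symm).resolve_left (pow_ne_zero k hne)
  rw [hwdef] at this
  exact this



variable {n : ℕ} {S Sr Dr Nr : Matrix (Idx n) (Idx n) ℂ}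

/-- the Hermitian-ized form of Q_{N_r} -/
def hN (n : ℕ) (Nr : Matrix (Idx n) (Idx n) ℂ) (a b : Idx n → ℂ) : ℂ :=
  gg n a (Nr.mulVec b) - gg n (Nr.mulVec a) b

lemma hN_offdiag (hS : InSp n S) (hpos : RePosQ n S)
    (hSr : IsRealPart n S Sr) (hJ : IsJordanDecomp n Sr Dr Nr) (hN2 : Nr * Nr = 0)
    {μ lam : ℂ} (hne : μ ≠ lam) {a b : Idx n → ℂ}
    (ha : a ∈ genEig n S μ) (hb : b ∈ genEig n S lam) :
    hN n Nr a b = 0 := by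
  have g1 : gg n a (Nr.mulVec b) = 0 := by
    by_cases him : lam.im = 0
    · refine key_vanish hS hpos hSr hJ hN2 him hb ?_ ha
      intro h
      apply hne
      have : μ = star lam := by rw [← h, star_star]
      rw [this, Complex.star_def, Complex.conj_eq_iff_im.mpr him]
    · rw [Nr_imag hSr hJ hN2 him hb, gg_zero_right]
  have g2 : gg n (Nr.mulVec a) b = 0 := by
    have hba : gg n b (Nr.mulVec a) = 0 := by
      by_cases him : μ.im = 0
      · refine key_vanish hS hpos hSr hJ hN2 him ha ?_ hb
        intro h
        apply hne
        have : lam = star μ := by rw [← h, star_star]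
        rw [this, Complex.star_def, Complex.conj_eq_iff_im.mpr him]
      · rw [Nr_imag hSr hJ hN2 him ha, gg_zero_right]
    have := gg_conj b (Nr.mulVec a)
    rw [hba] at this
    simpa using this.symm
  rw [hN, g1, g2, sub_zero]

lemma hN_diag (hS : InSp n S) (hpos : RePosQ n S)
    (hSr : IsRealPart n S Sr) (hJ : IsJordanDecomp n Sr Dr Nr) (hN2 : Nr * Nr = 0)
    {lam : ℂ} {a : Idx n → ℂ}
    (ha : a ∈ genEig n S lam) :
    0 ≤ (hN n Nr a a).re := by
  by_cases him : lam.im = 0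
  · have hlam : star lam = lam := by
      rw [Complex.star_def, Complex.conj_eq_iff_im]; exact him
    have hSa : S.mulVec a = lam • a + Nr.mulVec a := by
      rw [Nr_real hSr hJ hN2 him ha, Matrix.sub_mulVec, Matrix.smul_mulVec,
        Matrix.one_mulVec]
      abel
    have heq : hN n Nr a a = hf n S a a := by
      rw [hN, hf, hSa, gg_add_right, gg_add_left, gg_smul_right, gg_smul_left, hlam]
      ring
    rw [heq]
    exact hf_diag_nonneg hS hpos a
  · have hz : Nr.mulVec a = 0 := Nr_imag hSr hJ hN2 him ha
    rw [hN, hz, gg_zero_right, gg_zero_left, sub_zero]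
    simp

theorem statement6' (hS : InSp n S) (hpos : RePosQ n S) (hSr : IsRealPart n S Sr)
    (hJ : IsJordanDecomp n Sr Dr Nr) (hN2 : Nr * Nr = 0) :
    ∀ z : Idx n → ℂ, 0 ≤ (sigmaC n (conjVec n z) (Nr.mulVec z)).re := by
  intro z
  -- decompose z along generalized eigenspaces
  have htop : (⨆ μ : ℂ, genEig n S μ) = ⊤ :=
    Module.End.iSup_maxGenEigenspace_eq_top (Matrix.mulVecLin S)
  have hz : z ∈ ⨆ μ : ℂ, genEig n S μ := by rw [htop]; trivial
  rw [Submodule.mem_iSup_iff_exists_finsupp] at hz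
  obtain ⟨f, hfmem, hfsum⟩ := hz
  have hzsum : z = ∑ μ ∈ f.support, f μ := by
    rw [← hfsum]; rfl
  -- reduce to the Hermitian-ized form
  have hred : (hN n Nr z z).re = 2 * (gg n z (Nr.mulVec z)).re := by
    have hc : -gg n (Nr.mulVec z) z = star (gg n z (Nr.mulVec z)) := by
      rw [gg_conj]
    rw [hN, sub_eq_add_neg, hc, Complex.star_def, Complex.add_conj]
    simp
  have hmain : 0 ≤ (hN n Nr z z).re := by
    have hNv : Nr.mulVec (∑ lam ∈ f.support, f lam)
        = ∑ lam ∈ f.support, Nr.mulVec (f lam) := by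
      have : ∀ v, Nr.mulVec v = (Matrix.mulVecLin Nr) v := fun _ => rfl
      rw [this]
      exact map_sum (Matrix.mulVecLin Nr) f f.support
    have hexp : hN n Nr z z
        = ∑ μ ∈ f.support, ∑ lam ∈ f.support, hN n Nr (f μ) (f lam) := by
      simp only [hN]
      conv_lhs => rw [hzsum]
      rw [hNv, gg_sum_left, gg_sum_left, ← Finset.sum_sub_distrib]
      refine Finset.sum_congr rfl fun μ _ => ?_
      rw [gg_sum_right, gg_sum_right, ← Finset.sum_sub_distrib]
    rw [hexp, Complex.re_sum]
    apply Finset.sum_nonneg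
    intro μ hμ
    have hinner : ∑ lam ∈ f.support, hN n Nr (f μ) (f lam) = hN n Nr (f μ) (f μ) := by
      apply Finset.sum_eq_single_of_mem μ hμ
      intro lam hlam hne
      exact hN_offdiag hS hpos hSr hJ hN2 (Ne.symm hne) (hfmem μ) (hfmem lam)
    rw [hinner]
    exact hN_diag hS hpos hSr hJ hN2 (hfmem μ)
  rw [show sigmaC n (conjVec n z) (Nr.mulVec z) = gg n z (Nr.mulVec z) from rfl]
  linarith [hred, hmain]


end St6Aux

/-- if `Re Q_S ≥ 0` and `N_r² = 0`, then `Re Q_{N_r} ≥ 0`, i.e.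
`Re σ(z̄, N_r z) ≥ 0` for all `z ∈ ℂ^{2n}` (no condition (R) is needed). -/
theorem statement6 (n : ℕ) (S Sr Dr Nr : Matrix (Idx n) (Idx n) ℂ)
    (hS : InSp n S) (hpos : RePosQ n S) (hSr : IsRealPart n S Sr)
    (hJ : IsJordanDecomp n Sr Dr Nr) (hN2 : Nr * Nr = 0) :
    ∀ z : Idx n → ℂ, 0 ≤ (sigmaC n (conjVec n z) (Nr.mulVec z)).re :=
  St6Aux.statement6' hS hpos hSr hJ hN2
end
end

section
/- Let S ∈ sp(n,ℂ) have purely real spectrum, Re Q_S ≥ 0, and nilpotent part N (in the Jordan decomposition S = D + N) with N² = 0. Write S = S₁ + iS₂, N = N₁ + iN₂, D = D₁ + iD₂ with S₁, S₂, N₁, N₂, D₁, D₂ real matrices, and set W := N₁(ℝ^{2n}) + N₂(ℝ^{2n}) and K := W^⊥ = {v ∈ ℝ^{2n} : σ(v,w) = 0 for all w ∈ W}. Then: W is an isotropic subspace of ℝ^{2n}; K = Ker N₁ ∩ Ker N₂ ⊇ W; S₁(K) = 0, S₂(K) ⊆ K and S₂(W) ⊆ W (hence D₁(K) = 0, D₂(K)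 ⊆ K, D₂(W) ⊆ W); the complexification of K equals Σ_{λ∈spec S} Ker(S−λ); and W = Σ_{λ∈spec S, λ≥0} W_λ, where W_λ := W ∩ (Ker(S−λ) + Ker(S+λ)). -/
open MeasureTheory Complex Matrix

noncomputable section

/-- `W := N₁(ℝ^{2n}) + N₂(ℝ^{2n})`, where `N = N₁ + iN₂`. -/
def Wsub (n : ℕ) (N : Matrix (Idx n) (Idx n) ℂ) : Submodule ℝ (Idx n → ℝ) :=
  LinearMap.range (Matrix.mulVecLin (N.map Complex.re)) ⊔
    LinearMap.range (Matrix.mulVecLin (N.map Complex.im))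

/-- `K := W^⊥ = {v ∈ ℝ^{2n} : σ(v, w) = 0 ∀ w ∈ W}`. -/
def Kset (n : ℕ) (N : Matrix (Idx n) (Idx n) ℂ) : Set (Idx n → ℝ) :=
  {v | ∀ w ∈ Wsub n N, sigmaR n v w = 0}

/-- `Ker (S - λ)`. -/
def kerEig (n : ℕ) (S : Matrix (Idx n) (Idx n) ℂ) (lam : ℂ) : Submodule ℂ (Idx n → ℂ) :=
  LinearMap.ker (Matrix.mulVecLin (S - lam • 1))
namespace Stmt7

variable {n : ℕ}

lemma jmat_sq : Jmat n * Jmat n = -1 := by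
  simp only [Jmat, Matrix.fromBlocks_multiply]
  rw [show (-1 : Matrix (Idx n) (Idx n) ℂ) = -(Matrix.fromBlocks 1 0 0 1) by
    rw [Matrix.fromBlocks_one], Matrix.fromBlocks_neg]
  norm_num

lemma jmat_transpose : (Jmat n)ᵀ = -Jmat n := by
  simp [Jmat, Matrix.fromBlocks_transpose, Matrix.fromBlocks_neg]

lemma jmatR_entry (i j : Idx n) : Jmat n i j = ((JmatR n i j : ℝ) : ℂ) := by
  cases i <;> cases j <;>
    simp [Jmat, JmatR, Matrix.fromBlocks, Matrix.one_apply] <;> split <;> simp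

lemma jmat_conj (i j : Idx n) : (starRingEnd ℂ) (Jmat n i j) = Jmat n i j := by
  rw [jmatR_entry]; exact Complex.conj_ofReal _

lemma sigmaC_add_left (z z' w : Idx n → ℂ) :
    sigmaC n (z + z') w = sigmaC n z w + sigmaC n z' w := add_dotProduct _ _ _

lemma sigmaC_add_right (z w w' : Idx n → ℂ) :
    sigmaC n z (w + w') = sigmaC n z w + sigmaC n z w' := by
  simp [sigmaC, Matrix.mulVec_add, dotProduct_add]

lemma sigmaC_smul_left (c : ℂ) (z w : Idx n → ℂ) :
    sigmaC n (c • z) w = c * sigmaC n z w := smul_dotProduct _ _ _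

lemma sigmaC_smul_right (c : ℂ) (z w : Idx n → ℂ) :
    sigmaC n z (c • w) = c * sigmaC n z w := by
  simp [sigmaC, Matrix.mulVec_smul, dotProduct_smul, smul_eq_mul]

lemma sigmaC_sum_left {ι : Type*} (s : Finset ι) (f : ι → Idx n → ℂ) (w : Idx n → ℂ) :
    sigmaC n (∑ i ∈ s, f i) w = ∑ i ∈ s, sigmaC n (f i) w := by
  classical
  induction s using Finset.induction_on with
  | empty => simp [sigmaC]
  | insert _ _ h ih => simp [Finset.sum_insert h, sigmaC_add_left, ih]

lemma sigmaC_sum_right {ι : Type*} (s : Finset ι) (z : Idx n → ℂ) (f : ι → Idx n → ℂ) :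
    sigmaC n z (∑ i ∈ s, f i) = ∑ i ∈ s, sigmaC n z (f i) := by
  classical
  induction s using Finset.induction_on with
  | empty => simp [sigmaC]
  | insert _ _ h ih => simp [Finset.sum_insert h, sigmaC_add_right, ih]

lemma sigmaC_antisymm (z w : Idx n → ℂ) : sigmaC n z w = - sigmaC n w z := by
  rw [sigmaC, dotProduct_mulVec, ← Matrix.mulVec_transpose, jmat_transpose]
  simp [Matrix.neg_mulVec, dotProduct_comm, sigmaC]

lemma sigmaC_sp {S : Matrix (Idx n) (Idx n) ℂ} (hS : InSp n S) (z w : Idx n → ℂ) :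
    sigmaC n (S.mulVec z) w = - sigmaC n z (S.mulVec w) := by
  have h : Sᵀ * Jmat n = -(Jmat n * S) := eq_neg_of_add_eq_zero_left hS
  rw [sigmaC, dotProduct_mulVec, Matrix.vecMul_mulVec, h]
  simp [sigmaC, Matrix.mulVec_mulVec, Matrix.vecMul_neg, neg_dotProduct, dotProduct_mulVec]

lemma sigmaC_qsymm {S : Matrix (Idx n) (Idx n) ℂ} (hS : InSp n S) (z w : Idx n → ℂ) :
    sigmaC n z (S.mulVec w) = sigmaC n w (S.mulVec z) := by
  rw [← neg_neg (sigmaC n w (S.mulVec z)), ← sigmaC_sp hS, ← sigmaC_antisymm]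

lemma sigmaC_nondeg {x : Idx n → ℂ} (h : ∀ w, sigmaC n w x = 0) : x = 0 := by
  have hJ : (Jmat n).mulVec x = 0 := by
    funext j
    have := h (Pi.single j 1)
    simpa [sigmaC, single_dotProduct] using this
  have : ((Jmat n * Jmat n).mulVec x) = 0 := by
    rw [← Matrix.mulVec_mulVec, hJ, Matrix.mulVec_zero]
  rw [jmat_sq] at this
  simpa [Matrix.neg_mulVec] using this

lemma sigmaC_conj (z w : Idx n → ℂ) :
    sigmaC n (conjVec n z) (conjVec n w) = (starRingEnd ℂ) (sigmaC n z w) := by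
  simp only [sigmaC, dotProduct, Matrix.mulVec, map_sum, _root_.map_mul, conjVec]
  refine Finset.sum_congr rfl fun i _ => ?_
  congr 1
  simp only [map_sum, _root_.map_mul, jmat_conj]

end Stmt7
namespace Stmt7

variable {n : ℕ}

/-- real part of a complex vector -/
def reVec (z : Idx n → ℂ) : Idx n → ℝ := fun i => (z i).re

/-- imaginary part of a complex vector -/
def imVec (z : Idx n → ℂ) : Idx n → ℝ := fun i => (z i).im

lemma realVec_add (u v : Idx n → ℝ) : realVec n (u + v) = realVec n u + realVec n v := by
  funext i; simp [realVec]

@[simp] lemma realVec_zero : realVec n (0 : Idx n → ℝ) = 0 := by funext i; simp [realVec]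

lemma realVec_eq_zero {v : Idx n → ℝ} : realVec n v = 0 ↔ v = 0 := by
  constructor
  · intro h; funext i; have := congrFun h i; simpa [realVec] using this
  · rintro rfl; simp

lemma z_decomp (z : Idx n → ℂ) :
    z = realVec n (reVec z) + Complex.I • realVec n (imVec z) := by
  funext i
  simp [realVec, reVec, imVec, Complex.ext_iff]

lemma conjVec_realVec (v : Idx n → ℝ) : conjVec n (realVec n v) = realVec n v := by
  funext i; simp [conjVec, realVec, Complex.conj_ofReal]

lemma conjVec_add (z w : Idx n → ℂ) :
    conjVec n (z + w) = conjVec n z + conjVec n w := by funext i; simp [conjVec]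

lemma conjVec_smul (c : ℂ) (z : Idx n → ℂ) :
    conjVec n (c • z) = (starRingEnd ℂ) c • conjVec n z := by funext i; simp [conjVec]

lemma conjVec_smul_real (t : ℝ) (z : Idx n → ℂ) :
    conjVec n ((t : ℂ) • z) = (t : ℂ) • conjVec n z := by
  rw [conjVec_smul, Complex.conj_ofReal]

@[simp] lemma conjVec_conjVec (z : Idx n → ℂ) : conjVec n (conjVec n z) = z := by
  funext i; simp [conjVec]

@[simp] lemma conjVec_zero : conjVec n (0 : Idx n → ℂ) = 0 := by funext i; simp [conjVec]

lemma conjVec_eq_zero {z : Idx n → ℂ} : conjVec n z = 0 ↔ z = 0 := by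
  constructor
  · intro h; have := congrArg (conjVec n) h; simpa using this
  · rintro rfl; simp

lemma conjVec_sum {ι : Type*} (s : Finset ι) (f : ι → Idx n → ℂ) :
    conjVec n (∑ i ∈ s, f i) = ∑ i ∈ s, conjVec n (f i) := by
  classical
  induction s using Finset.induction_on with
  | empty => simp
  | insert _ _ h ih => simp [Finset.sum_insert h, conjVec_add, ih]

lemma map_re_mulVec (M : Matrix (Idx n) (Idx n) ℂ) (v : Idx n → ℝ) :
    (M.map Complex.re).mulVec v = reVec (M.mulVec (realVec n v)) := by
  funext i
  simp [Matrix.mulVec, dotProduct, reVec, realVec, Matrix.map_apply, Complex.re_sum,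
    Complex.mul_re]

lemma map_im_mulVec (M : Matrix (Idx n) (Idx n) ℂ) (v : Idx n → ℝ) :
    (M.map Complex.im).mulVec v = imVec (M.mulVec (realVec n v)) := by
  funext i
  simp [Matrix.mulVec, dotProduct, imVec, realVec, Matrix.map_apply, Complex.im_sum,
    Complex.mul_im]

lemma mulVec_realVec (M : Matrix (Idx n) (Idx n) ℂ) (v : Idx n → ℝ) :
    M.mulVec (realVec n v) =
      realVec n ((M.map Complex.re).mulVec v) + Complex.I • realVec n ((M.map Complex.im).mulVec v) := by
  rw [map_re_mulVec, map_im_mulVec]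
  exact z_decomp _

lemma mulVec_realVec_eq_zero_iff (M : Matrix (Idx n) (Idx n) ℂ) (v : Idx n → ℝ) :
    M.mulVec (realVec n v) = 0 ↔
      (M.map Complex.re).mulVec v = 0 ∧ (M.map Complex.im).mulVec v = 0 := by
  rw [map_re_mulVec, map_im_mulVec]
  constructor
  · intro h
    constructor <;> [skip; skip] <;> funext i <;>
      · have := congrFun h i
        simp [reVec, imVec, Complex.ext_iff] at this ⊢
        tauto
  · rintro ⟨h1, h2⟩
    funext i
    have e1 := congrFun h1 i
    have e2 := congrFun h2 i
    simp [reVec, imVec] at e1 e2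
    simp [Complex.ext_iff, reVec, imVec, e1, e2]

lemma sigmaC_real (u w : Idx n → ℝ) :
    sigmaC n (realVec n u) (realVec n w) = ((sigmaR n u w : ℝ) : ℂ) := by
  simp only [sigmaC, sigmaR, dotProduct, Matrix.mulVec, realVec, Complex.ofReal_sum]
  refine Finset.sum_congr rfl fun i _ => ?_
  rw [Complex.ofReal_mul, Complex.ofReal_sum]
  congr 1
  refine Finset.sum_congr rfl fun j _ => ?_
  rw [Complex.ofReal_mul, jmatR_entry]

lemma jmatR_sq : JmatR n * JmatR n = -1 := by
  simp only [JmatR, Matrix.fromBlocks_multiply]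
  rw [show (-1 : Matrix (Idx n) (Idx n) ℝ) = -(Matrix.fromBlocks 1 0 0 1) by
    rw [Matrix.fromBlocks_one], Matrix.fromBlocks_neg]
  norm_num

lemma jmatR_transpose : (JmatR n)ᵀ = -JmatR n := by
  simp [JmatR, Matrix.fromBlocks_transpose, Matrix.fromBlocks_neg]

lemma sigmaR_antisymm (v w : Idx n → ℝ) : sigmaR n v w = - sigmaR n w v := by
  rw [sigmaR, dotProduct_mulVec, ← Matrix.mulVec_transpose, jmatR_transpose]
  simp [Matrix.neg_mulVec, dotProduct_comm, sigmaR]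

lemma sigmaR_nondeg {x : Idx n → ℝ} (h : ∀ w, sigmaR n w x = 0) : x = 0 := by
  have hJ : (JmatR n).mulVec x = 0 := by
    funext j
    have := h (Pi.single j 1)
    simpa [sigmaR, single_dotProduct] using this
  have : ((JmatR n * JmatR n).mulVec x) = 0 := by
    rw [← Matrix.mulVec_mulVec, hJ, Matrix.mulVec_zero]
  rw [jmatR_sq] at this
  simpa [Matrix.neg_mulVec] using this

lemma sigmaR_nondeg' {x : Idx n → ℝ} (h : ∀ w, sigmaR n x w = 0) : x = 0 := by
  refine sigmaR_nondeg fun w => ?_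
  have := h w
  rw [sigmaR_antisymm] at this
  linarith

lemma sigmaR_add_right (v w w' : Idx n → ℝ) :
    sigmaR n v (w + w') = sigmaR n v w + sigmaR n v w' := by
  simp [sigmaR, Matrix.mulVec_add, dotProduct_add]

end Stmt7
namespace Stmt7

variable {n : ℕ} {S : Matrix (Idx n) (Idx n) ℂ}

lemma H_eq (hS : InSp n S) (z : Idx n → ℂ) :
    sigmaC n (conjVec n z) (S.mulVec z)
      = sigmaC n (realVec n (reVec z)) (S.mulVec (realVec n (reVec z)))
        + sigmaC n (realVec n (imVec z)) (S.mulVec (realVec n (imVec z))) := by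
  have hbc := sigmaC_qsymm hS (realVec n (reVec z)) (realVec n (imVec z))
  conv_lhs => rw [z_decomp z]
  rw [conjVec_add, conjVec_smul, Complex.conj_I, conjVec_realVec, conjVec_realVec]
  simp only [Matrix.mulVec_add, Matrix.mulVec_smul, sigmaC_add_left, sigmaC_add_right,
    sigmaC_smul_left, sigmaC_smul_right]
  linear_combination (Complex.I : ℂ) * hbc - sigmaC n (realVec n (imVec z)) (S.mulVec (realVec n (imVec z))) * Complex.I_sq

lemma H_nonneg (hS : InSp n S) (hpos : RePosQ n S) (z : Idx n → ℂ) :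
    0 ≤ (sigmaC n (conjVec n z) (S.mulVec z)).re := by
  rw [H_eq hS z, Complex.add_re]
  exact add_nonneg (hpos _) (hpos _)

lemma quad_aux {a b : ℝ} (ha : 0 ≤ a) (h : ∀ t : ℝ, 0 ≤ a * t ^ 2 + b * t) : b = 0 := by
  have h2 : (0:ℝ) < a + 1 := by linarith
  have h1 := h (-(b / (a + 1)))
  have h3 : a * (-(b / (a + 1))) ^ 2 + b * (-(b / (a + 1))) = -(b ^ 2 / (a + 1) ^ 2)
      - b ^ 2 * a * ((a+1)^2 - (a+1)*(a+1)) / ((a+1)^2*(a+1)^2) := by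
    field_simp
    ring
  have h4 : a * (-(b / (a + 1))) ^ 2 + b * (-(b / (a + 1))) = -(b ^ 2 / (a + 1) ^ 2) := by
    rw [h3]; ring_nf
  rw [h4] at h1
  have hp : (0:ℝ) < (a + 1) ^ 2 := by positivity
  have h5 : b ^ 2 / (a + 1) ^ 2 ≤ 0 := by linarith
  have h6 := mul_le_mul_of_nonneg_right h5 (le_of_lt hp)
  rw [div_mul_cancel₀ _ (ne_of_gt hp), zero_mul] at h6
  have h7 : b ^ 2 = 0 := le_antisymm h6 (sq_nonneg b)
  exact pow_eq_zero_iff two_ne_zero |>.mp h7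

lemma sigma_conj_self_re (z : Idx n → ℂ) : (sigmaC n (conjVec n z) z).re = 0 := by
  have h1 : (starRingEnd ℂ) (sigmaC n (conjVec n z) z) = sigmaC n z (conjVec n z) := by
    rw [← sigmaC_conj]; simp
  have h2 := sigmaC_antisymm (n := n) z (conjVec n z)
  have h3 : (starRingEnd ℂ) (sigmaC n (conjVec n z) z) = - sigmaC n (conjVec n z) z := by
    rw [h1, h2]
  have := congrArg Complex.re h3
  simp only [Complex.conj_re, Complex.neg_re] at this
  linarith

lemma eig_conj (hS : InSp n S) (hpos : RePosQ n S) {lam : ℝ} {z : Idx n → ℂ}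
    (hz : S.mulVec z = (lam : ℂ) • z) :
    S.mulVec (conjVec n z) = (-(lam : ℂ)) • conjVec n z := by
  -- the quadratic form H vanishes at z
  have hHz : (sigmaC n (conjVec n z) (S.mulVec z)).re = 0 := by
    rw [hz, sigmaC_smul_right]
    simp [Complex.mul_re, sigma_conj_self_re]
  -- polarization: cross terms vanish
  have key : ∀ w : Idx n → ℂ,
      (sigmaC n (conjVec n z) (S.mulVec w) + sigmaC n (conjVec n w) (S.mulVec z)).re = 0 := by
    intro w
    have expand : ∀ t : ℝ,
        sigmaC n (conjVec n (z + (t : ℂ) • w)) (S.mulVec (z + (t : ℂ) • w))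
          = sigmaC n (conjVec n z) (S.mulVec z)
            + (t : ℂ) * (sigmaC n (conjVec n z) (S.mulVec w)
                + sigmaC n (conjVec n w) (S.mulVec z))
            + (t : ℂ) ^ 2 * sigmaC n (conjVec n w) (S.mulVec w) := by
      intro t
      rw [conjVec_add, conjVec_smul_real]
      simp only [Matrix.mulVec_add, Matrix.mulVec_smul, sigmaC_add_left, sigmaC_add_right,
        sigmaC_smul_left, sigmaC_smul_right]
      ring
    refine quad_aux (H_nonneg hS hpos w) fun t => ?_
    have h0 := H_nonneg hS hpos (z + (t : ℂ) • w)
    rw [expand t] at h0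
    simp only [Complex.add_re, Complex.mul_re, Complex.ofReal_re, Complex.ofReal_im,
      pow_two, Complex.mul_im, zero_mul, mul_zero, sub_zero, zero_sub, add_zero, hHz] at h0
    rw [Complex.add_re]
    ring_nf
    ring_nf at h0
    linarith
  -- rewrite the cross term as Re σ(w, S z̄ + λ z̄)
  have key2 : ∀ w : Idx n → ℂ,
      (sigmaC n w (S.mulVec (conjVec n z) + (lam : ℂ) • conjVec n z)).re = 0 := by
    intro w
    have h1 := key w
    rw [hz, sigmaC_smul_right] at h1
    have e1 : sigmaC n (conjVec n z) (S.mulVec w) = sigmaC n w (S.mulVec (conjVec n z)) :=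
      sigmaC_qsymm hS _ _
    have e2 : sigmaC n (conjVec n w) z = (starRingEnd ℂ) (sigmaC n w (conjVec n z)) := by
      rw [← sigmaC_conj]; simp
    rw [e1, e2] at h1
    rw [sigmaC_add_right, sigmaC_smul_right]
    simp only [Complex.add_re, Complex.mul_re, Complex.ofReal_re, Complex.ofReal_im,
      Complex.conj_re, Complex.conj_im, zero_mul, sub_zero] at h1 ⊢
    linarith
  have key3 : ∀ w : Idx n → ℂ,
      sigmaC n w (S.mulVec (conjVec n z) + (lam : ℂ) • conjVec n z) = 0 := by
    intro w
    have hre := key2 w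
    have him := key2 (Complex.I • w)
    rw [sigmaC_smul_left] at him
    simp only [Complex.mul_re, Complex.I_re, Complex.I_im, zero_mul, one_mul, zero_sub,
      neg_eq_zero] at him
    exact Complex.ext hre him
  have hx := sigmaC_nondeg key3
  rw [neg_smul]
  exact eq_neg_of_add_eq_zero_left hx

end Stmt7
namespace Stmt7

variable {n : ℕ}

lemma mulVec_sumv {ι : Type*} (M : Matrix (Idx n) (Idx n) ℂ) (s : Finset ι)
    (f : ι → Idx n → ℂ) : M.mulVec (∑ i ∈ s, f i) = ∑ i ∈ s, M.mulVec (f i) := by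
  classical
  induction s using Finset.induction_on with
  | empty => simp [Matrix.mulVec_zero]
  | insert _ _ h ih => rw [Finset.sum_insert h, Finset.sum_insert h, Matrix.mulVec_add, ih]

lemma smul_one_mulVec (c : ℂ) (x : Idx n → ℂ) :
    ((c • (1 : Matrix (Idx n) (Idx n) ℂ)).mulVec x) = c • x := by
  rw [Matrix.smul_mulVec, Matrix.one_mulVec]

lemma sub_smul_one_mulVec (M : Matrix (Idx n) (Idx n) ℂ) (c : ℂ) (x : Idx n → ℂ) :
    ((M - c • (1 : Matrix (Idx n) (Idx n) ℂ)).mulVec x) = M.mulVec x - c • x := by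
  rw [Matrix.sub_mulVec, smul_one_mulVec]

lemma mem_kerEig {S : Matrix (Idx n) (Idx n) ℂ} {c : ℂ} {z : Idx n → ℂ} :
    z ∈ kerEig n S c ↔ S.mulVec z = c • z := by
  rw [kerEig, LinearMap.mem_ker, Matrix.mulVecLin_apply, sub_smul_one_mulVec, sub_eq_zero]

/-- eigenvalues of `S` are real -/
lemma eig_real {S : Matrix (Idx n) (Idx n) ℂ}
    (hreal : ∀ z ∈ S.charpoly.roots, z.im = 0) {μ : ℂ} {x : Idx n → ℂ}
    (hx : x ≠ 0) (h : S.mulVec x = μ • x) : μ.im = 0 := by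
  apply hreal
  rw [Polynomial.mem_roots']
  refine ⟨(Matrix.charpoly_monic S).ne_zero, ?_⟩
  have hdet : (S - μ • (1 : Matrix (Idx n) (Idx n) ℂ)).det = 0 := by
    rw [← Matrix.exists_mulVec_eq_zero_iff]
    exact ⟨x, hx, by rw [sub_smul_one_mulVec, h, sub_self]⟩
  have hmap : (Polynomial.evalRingHom μ).mapMatrix (Matrix.charmatrix S)
      = μ • (1 : Matrix (Idx n) (Idx n) ℂ) - S := by
    ext i j
    by_cases hij : i = j <;>
      simp [hij, Matrix.charmatrix_apply, Matrix.one_apply, Matrix.diagonal_apply,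
        Matrix.smul_apply]
  have heval : S.charpoly.eval μ = (μ • (1 : Matrix (Idx n) (Idx n) ℂ) - S).det := by
    rw [Matrix.charpoly, ← hmap]
    exact RingHom.map_det (Polynomial.evalRingHom μ) (Matrix.charmatrix S)
  rw [Polynomial.IsRoot, heval, show μ • (1 : Matrix (Idx n) (Idx n) ℂ) - S
      = -(S - μ • (1 : Matrix (Idx n) (Idx n) ℂ)) by rw [neg_sub], Matrix.det_neg, hdet, mul_zero]

section Diag

variable (P : Matrix (Idx n) (Idx n) ℂ) (d : Idx n → ℂ)

/-- projection onto the `μ`-eigenspace of `P * diagonal d * P⁻¹` -/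
def prj (μ : ℂ) (z : Idx n → ℂ) : Idx n → ℂ :=
  P.mulVec (fun i => if d i = μ then (P⁻¹.mulVec z) i else 0)

variable {P d}

lemma prj_add (μ : ℂ) (x y : Idx n → ℂ) :
    prj P d μ (x + y) = prj P d μ x + prj P d μ y := by
  rw [prj, prj, prj, ← Matrix.mulVec_add]
  refine congrArg P.mulVec ?_
  funext i
  by_cases hd : d i = μ <;> simp [hd, Matrix.mulVec_add]

lemma prj_zero (μ : ℂ) : prj P d μ (0 : Idx n → ℂ) = 0 := by
  rw [prj]
  have : (fun i => if d i = μ then (P⁻¹.mulVec (0 : Idx n → ℂ)) i else 0)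
      = (0 : Idx n → ℂ) := by
    funext i
    by_cases hd : d i = μ <;> simp [hd, Matrix.mulVec_zero]
  rw [this, Matrix.mulVec_zero]

lemma prj_sum {ι : Type*} (s : Finset ι) (f : ι → Idx n → ℂ) (μ : ℂ) :
    prj P d μ (∑ i ∈ s, f i) = ∑ i ∈ s, prj P d μ (f i) := by
  classical
  induction s using Finset.induction_on with
  | empty => simp [prj_zero]
  | insert _ _ h ih => rw [Finset.sum_insert h, Finset.sum_insert h, prj_add, ih]

lemma sum_prj (hP : IsUnit P) (z : Idx n → ℂ) :
    ∑ μ ∈ Finset.image d Finset.univ, prj P d μ z = z := by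
  classical
  have h1 : ∑ μ ∈ Finset.image d Finset.univ, prj P d μ z
      = P.mulVec (∑ μ ∈ Finset.image d Finset.univ,
          (fun i => if d i = μ then (P⁻¹.mulVec z) i else 0)) := by
    rw [mulVec_sumv]; rfl
  rw [h1]
  have h2 : (∑ μ ∈ Finset.image d Finset.univ,
      (fun i => if d i = μ then (P⁻¹.mulVec z) i else 0)) = P⁻¹.mulVec z := by
    funext i
    rw [Finset.sum_apply]
    have h3 : ∀ μ ∈ Finset.image d Finset.univ,
        (fun i => if d i = μ then (P⁻¹.mulVec z) i else 0) i
          = if d i = μ then (P⁻¹.mulVec z) i else 0 := fun _ _ => rfl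
    rw [Finset.sum_congr rfl h3,
      Finset.sum_ite_eq (Finset.image d Finset.univ) (d i) (fun _ => (P⁻¹.mulVec z) i)]
    simp
  rw [h2, Matrix.mulVec_mulVec, Matrix.mul_nonsing_inv _
    ((Matrix.isUnit_iff_isUnit_det P).mp hP), Matrix.one_mulVec]

variable {D : Matrix (Idx n) (Idx n) ℂ}

lemma prj_eigen (hP : IsUnit P) (hD : D = P * Matrix.diagonal d * P⁻¹) (μ : ℂ) (z : Idx n → ℂ) :
    D.mulVec (prj P d μ z) = μ • prj P d μ z := by
  have hQP : P⁻¹ * P = 1 := Matrix.nonsing_inv_mul _ ((Matrix.isUnit_iff_isUnit_det P).mp hP)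
  have key : (Matrix.diagonal d).mulVec (fun i => if d i = μ then (P⁻¹.mulVec z) i else 0)
      = μ • (fun i => if d i = μ then (P⁻¹.mulVec z) i else 0) := by
    funext i
    rw [Matrix.mulVec_diagonal]
    by_cases hd : d i = μ <;> simp [hd]
  rw [prj, Matrix.mulVec_mulVec, hD, Matrix.mul_assoc (P * Matrix.diagonal d), hQP,
    Matrix.mul_one, ← Matrix.mulVec_mulVec, key, Matrix.mulVec_smul]

lemma prj_of_eigen (hP : IsUnit P) (hD : D = P * Matrix.diagonal d * P⁻¹) {μ : ℂ}
    {x : Idx n → ℂ} (hx : D.mulVec x = μ • x) (μ' : ℂ) :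
    prj P d μ' x = if μ' = μ then x else 0 := by
  have hQP : P⁻¹ * P = 1 := Matrix.nonsing_inv_mul _ ((Matrix.isUnit_iff_isUnit_det P).mp hP)
  have hPQ : P * P⁻¹ = 1 := Matrix.mul_nonsing_inv _ ((Matrix.isUnit_iff_isUnit_det P).mp hP)
  set c := P⁻¹.mulVec x with hc
  have hdiag : ∀ i, d i * c i = μ * c i := by
    intro i
    have h1 : P⁻¹.mulVec (D.mulVec x) = μ • c := by
      rw [hx, Matrix.mulVec_smul]
    have h2 : P⁻¹.mulVec (D.mulVec x) = (Matrix.diagonal d).mulVec c := by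
      rw [hc, Matrix.mulVec_mulVec, Matrix.mulVec_mulVec, hD, ← Matrix.mul_assoc,
        ← Matrix.mul_assoc, hQP, Matrix.one_mul]
    have h4 := congrFun (h2.symm.trans h1) i
    rw [Matrix.mulVec_diagonal] at h4
    simpa using h4
  have hsupp : ∀ i, d i ≠ μ → c i = 0 := by
    intro i hi
    have h5 : (d i - μ) * c i = 0 := by linear_combination hdiag i
    exact (mul_eq_zero.mp h5).resolve_left (sub_ne_zero.mpr hi)
  by_cases hμ : μ' = μ
  · subst hμ
    rw [if_pos rfl, prj]
    have he : (fun i => if d i = μ' then c i else 0) = c := by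
      funext i
      by_cases hd : d i = μ'
      · rw [if_pos hd]
      · rw [if_neg hd, (hsupp i hd).symm]
    rw [he, hc, Matrix.mulVec_mulVec, hPQ, Matrix.one_mulVec]
  · rw [if_neg hμ, prj]
    have he : (fun i => if d i = μ' then c i else 0) = (0 : Idx n → ℂ) := by
      funext i
      by_cases hd : d i = μ'
      · rw [if_pos hd]
        exact hsupp i (by rw [hd]; exact hμ)
      · rw [if_neg hd]; rfl
    rw [he, Matrix.mulVec_zero]

end Diag

end Stmt7
namespace Stmt7

section Main

variable {n : ℕ} {S D N P : Matrix (Idx n) (Idx n) ℂ} {d : Idx n → ℂ}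

lemma hSN (hSDN : S = D + N) (hDN : D * N = N * D) (hN2 : N * N = 0) : S * N = N * S := by
  rw [hSDN, add_mul, mul_add, hN2, hDN]

lemma NN_vec (hN2 : N * N = 0) (z : Idx n → ℂ) : N.mulVec (N.mulVec z) = 0 := by
  rw [Matrix.mulVec_mulVec, hN2, Matrix.zero_mulVec]

lemma eigen_supp (hP : IsUnit P) (hD : D = P * Matrix.diagonal d * P⁻¹) {μ : ℂ}
    {x : Idx n → ℂ} (hx : D.mulVec x = μ • x) : ∀ i, d i ≠ μ → (P⁻¹.mulVec x) i = 0 := by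
  have hQP : P⁻¹ * P = 1 := Matrix.nonsing_inv_mul _ ((Matrix.isUnit_iff_isUnit_det P).mp hP)
  intro i hi
  have h1 : P⁻¹.mulVec (D.mulVec x) = μ • P⁻¹.mulVec x := by
    rw [hx, Matrix.mulVec_smul]
  have h2 : P⁻¹.mulVec (D.mulVec x) = (Matrix.diagonal d).mulVec (P⁻¹.mulVec x) := by
    rw [Matrix.mulVec_mulVec, Matrix.mulVec_mulVec, hD, ← Matrix.mul_assoc,
      ← Matrix.mul_assoc, hQP, Matrix.one_mul]
  have h4 := congrFun (h2.symm.trans h1) i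
  rw [Matrix.mulVec_diagonal] at h4
  have h5 : (d i - μ) * (P⁻¹.mulVec x) i = 0 := by
    simp only [Pi.smul_apply, smul_eq_mul] at h4
    linear_combination h4
  exact (mul_eq_zero.mp h5).resolve_left (sub_ne_zero.mpr hi)

/-- an eigenvector of the semisimple `D` lying in the range of `D - μ` is zero -/
lemma sq_ker (hP : IsUnit P) (hD : D = P * Matrix.diagonal d * P⁻¹) {μ : ℂ} {x : Idx n → ℂ}
    (h : D.mulVec (D.mulVec x - μ • x) = μ • (D.mulVec x - μ • x)) :
    D.mulVec x - μ • x = 0 := by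
  have hQP : P⁻¹ * P = 1 := Matrix.nonsing_inv_mul _ ((Matrix.isUnit_iff_isUnit_det P).mp hP)
  have hPQ : P * P⁻¹ = 1 := Matrix.mul_nonsing_inv _ ((Matrix.isUnit_iff_isUnit_det P).mp hP)
  set y := D.mulVec x - μ • x with hy
  have hsupp := eigen_supp hP hD h
  have hker : ∀ i, d i = μ → (P⁻¹.mulVec y) i = 0 := by
    intro i hi
    have h1 : P⁻¹.mulVec y = (Matrix.diagonal d).mulVec (P⁻¹.mulVec x)
        - μ • P⁻¹.mulVec x := by
      rw [hy, Matrix.mulVec_sub, Matrix.mulVec_smul, Matrix.mulVec_mulVec, Matrix.mulVec_mulVec,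
        hD, ← Matrix.mul_assoc, ← Matrix.mul_assoc, hQP, Matrix.one_mul]
    have h2 := congrFun h1 i
    rw [Pi.sub_apply, Matrix.mulVec_diagonal, hi] at h2
    simp only [Pi.smul_apply, smul_eq_mul] at h2
    rw [h2]; ring
  have hc : P⁻¹.mulVec y = 0 := by
    funext i
    by_cases hd : d i = μ
    · exact hker i hd
    · exact hsupp i hd
  have hrec : P.mulVec (P⁻¹.mulVec y) = y := by
    rw [Matrix.mulVec_mulVec, hPQ, Matrix.one_mulVec]
  rw [← hrec, hc, Matrix.mulVec_zero]

/-- `Ker (S - λ) ⊆ Ker N` for every `λ` -/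
lemma kerEig_le_kerN (hP : IsUnit P) (hD : D = P * Matrix.diagonal d * P⁻¹)
    (hSDN : S = D + N) (hDN : D * N = N * D) (hN2 : N * N = 0)
    {lam : ℂ} {z : Idx n → ℂ} (hz : S.mulVec z = lam • z) : N.mulVec z = 0 := by
  have hDz : D.mulVec z - lam • z = -(N.mulVec z) := by
    have h0 : D.mulVec z + N.mulVec z = lam • z := by
      rw [← Matrix.add_mulVec, ← hSDN, hz]
    rw [← h0]; abel
  have hNDz : D.mulVec (N.mulVec z) = lam • N.mulVec z := by
    have h1 : D.mulVec (N.mulVec z) = N.mulVec (D.mulVec z) := by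
      rw [Matrix.mulVec_mulVec, Matrix.mulVec_mulVec, hDN]
    have h2 : D.mulVec z = lam • z - N.mulVec z := by
      have := hDz
      rw [sub_eq_iff_eq_add] at this
      rw [this]; abel
    rw [h1, h2, Matrix.mulVec_sub, Matrix.mulVec_smul, NN_vec hN2, sub_zero]
  have heig : D.mulVec (D.mulVec z - lam • z) = lam • (D.mulVec z - lam • z) := by
    rw [hDz, Matrix.mulVec_neg, hNDz, smul_neg]
  have hfin := sq_ker hP hD heig
  rw [hDz, neg_eq_zero] at hfin
  exact hfin

/-- decomposition of a vector in `Ker N` into eigenvectors of `S` -/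
lemma kerN_decomp (hreal : ∀ z ∈ S.charpoly.roots, z.im = 0)
    (hP : IsUnit P) (hD : D = P * Matrix.diagonal d * P⁻¹)
    (hSDN : S = D + N) (hDN : D * N = N * D) (hN2 : N * N = 0)
    {z : Idx n → ℂ} (hz : N.mulVec z = 0) :
    ∃ c : ℂ → (Idx n → ℂ), z = ∑ μ ∈ Finset.image d Finset.univ, c μ ∧
      ∀ μ ∈ Finset.image d Finset.univ, S.mulVec (c μ) = μ • c μ ∧ N.mulVec (c μ) = 0 ∧
        (c μ ≠ 0 → μ.im = 0) := by
  classical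
  refine ⟨fun μ => prj P d μ z, (sum_prj hP z).symm, fun μ hμ => ?_⟩
  have hDx : D.mulVec (prj P d μ z) = μ • prj P d μ z := prj_eigen hP hD μ z
  have hNx : N.mulVec (prj P d μ z) = 0 := by
    have h0 : ∑ ν ∈ Finset.image d Finset.univ, N.mulVec (prj P d ν z) = 0 := by
      rw [← mulVec_sumv, sum_prj hP z, hz]
    have h1 := congrArg (prj P d μ) h0
    rw [prj_sum, prj_zero] at h1
    have h2 : ∀ ν ∈ Finset.image d Finset.univ,
        prj P d μ (N.mulVec (prj P d ν z)) = if μ = ν then N.mulVec (prj P d ν z) else 0 := by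
      intro ν _
      refine prj_of_eigen hP hD ?_ μ
      have hcomm : D.mulVec (N.mulVec (prj P d ν z)) = N.mulVec (D.mulVec (prj P d ν z)) := by
        rw [Matrix.mulVec_mulVec, Matrix.mulVec_mulVec, hDN]
      rw [hcomm, prj_eigen hP hD, Matrix.mulVec_smul]
    rw [Finset.sum_congr rfl h2, Finset.sum_ite_eq (Finset.image d Finset.univ) μ
      (fun ν => N.mulVec (prj P d ν z)), if_pos hμ] at h1
    exact h1
  have hSx : S.mulVec (prj P d μ z) = μ • prj P d μ z := by
    rw [hSDN, Matrix.add_mulVec, hDx, hNx, add_zero]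
  refine ⟨hSx, hNx, fun hne => eig_real hreal hne hSx⟩

/-- `Ker N = ⨆_{λ ∈ ℝ} Ker (S - λ)` -/
lemma kerN_eq (hreal : ∀ z ∈ S.charpoly.roots, z.im = 0)
    (hP : IsUnit P) (hD : D = P * Matrix.diagonal d * P⁻¹)
    (hSDN : S = D + N) (hDN : D * N = N * D) (hN2 : N * N = 0) :
    LinearMap.ker N.mulVecLin = ⨆ lam : ℝ, kerEig n S (lam : ℂ) := by
  apply le_antisymm
  · intro z hz
    rw [LinearMap.mem_ker, Matrix.mulVecLin_apply] at hz
    obtain ⟨c, hzc, hc⟩ := kerN_decomp hreal hP hD hSDN hDN hN2 hz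
    rw [hzc]
    refine Submodule.sum_mem _ fun μ hμ => ?_
    obtain ⟨hSx, -, him⟩ := hc μ hμ
    by_cases hne : c μ = 0
    · rw [hne]; exact Submodule.zero_mem _
    · have hμre : μ = ((μ.re : ℝ) : ℂ) := by
        refine Complex.ext ?_ ?_
        · simp
        · simp [him hne]
      refine Submodule.mem_iSup_of_mem μ.re ?_
      rw [mem_kerEig, ← hμre]
      exact hSx
  · refine iSup_le fun lam => fun z hz => ?_
    rw [mem_kerEig] at hz
    rw [LinearMap.mem_ker, Matrix.mulVecLin_apply]
    exact kerEig_le_kerN hP hD hSDN hDN hN2 hz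

/-- `Ker N` is conjugation stable -/
lemma kerN_conj (hS : InSp n S) (hreal : ∀ z ∈ S.charpoly.roots, z.im = 0)
    (hpos : RePosQ n S)
    (hP : IsUnit P) (hD : D = P * Matrix.diagonal d * P⁻¹)
    (hSDN : S = D + N) (hDN : D * N = N * D) (hN2 : N * N = 0)
    {z : Idx n → ℂ} (hz : N.mulVec z = 0) : N.mulVec (conjVec n z) = 0 := by
  obtain ⟨c, hzc, hc⟩ := kerN_decomp hreal hP hD hSDN hDN hN2 hz
  have h1 : conjVec n z = ∑ μ ∈ Finset.image d Finset.univ, conjVec n (c μ) := by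
    rw [hzc, conjVec_sum]
  rw [h1, mulVec_sumv]
  refine Finset.sum_eq_zero fun μ hμ => ?_
  obtain ⟨hSx, -, him⟩ := hc μ hμ
  by_cases hne : c μ = 0
  · rw [hne, conjVec_zero, Matrix.mulVec_zero]
  · have hμre : μ = ((μ.re : ℝ) : ℂ) := Complex.ext (by simp) (by simp [him hne])
    have hconj := eig_conj hS hpos (lam := μ.re) (z := c μ) (by rw [← hμre]; exact hSx)
    exact kerEig_le_kerN hP hD hSDN hDN hN2 hconj

end Main

end Stmt7
namespace Stmt7

section Main2

variable {n : ℕ} {S D N P : Matrix (Idx n) (Idx n) ℂ} {d : Idx n → ℂ}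

/-- `σ` pairs `D`-eigenspaces only for opposite eigenvalues -/
lemma pairing (hS : InSp n S) (hSDN : S = D + N) (hDN : D * N = N * D) (hN2 : N * N = 0)
    {μ ν : ℂ} {x y : Idx n → ℂ} (hx : D.mulVec x = μ • x) (hy : D.mulVec y = ν • y)
    (hμν : μ + ν ≠ 0) : sigmaC n x y = 0 := by
  have sp0 : ∀ u v : Idx n → ℂ,
      sigmaC n (S.mulVec u) v + sigmaC n u (S.mulVec v) = 0 := fun u v => by
    rw [sigmaC_sp hS]; ring
  have hSx : S.mulVec x = μ • x + N.mulVec x := by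
    rw [hSDN, Matrix.add_mulVec, hx]
  have hSy : S.mulVec y = ν • y + N.mulVec y := by
    rw [hSDN, Matrix.add_mulVec, hy]
  have hDa : D.mulVec (N.mulVec x) = μ • N.mulVec x := by
    rw [Matrix.mulVec_mulVec, hDN, ← Matrix.mulVec_mulVec, hx, Matrix.mulVec_smul]
  have hDb : D.mulVec (N.mulVec y) = ν • N.mulVec y := by
    rw [Matrix.mulVec_mulVec, hDN, ← Matrix.mulVec_mulVec, hy, Matrix.mulVec_smul]
  have hSa : S.mulVec (N.mulVec x) = μ • N.mulVec x := by
    rw [hSDN, Matrix.add_mulVec, hDa, NN_vec hN2, add_zero]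
  have hSb : S.mulVec (N.mulVec y) = ν • N.mulVec y := by
    rw [hSDN, Matrix.add_mulVec, hDb, NN_vec hN2, add_zero]
  -- σ(a, b) = 0
  have hab : sigmaC n (N.mulVec x) (N.mulVec y) = 0 := by
    have h := sp0 (N.mulVec x) (N.mulVec y)
    rw [hSa, hSb, sigmaC_smul_left, sigmaC_smul_right] at h
    have : (μ + ν) * sigmaC n (N.mulVec x) (N.mulVec y) = 0 := by linear_combination h
    exact (mul_eq_zero.mp this).resolve_left hμν
  -- σ(a, y) = 0
  have hay : sigmaC n (N.mulVec x) y = 0 := by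
    have h := sp0 (N.mulVec x) y
    rw [hSa, hSy, sigmaC_smul_left, sigmaC_add_right, sigmaC_smul_right, hab] at h
    have : (μ + ν) * sigmaC n (N.mulVec x) y = 0 := by linear_combination h
    exact (mul_eq_zero.mp this).resolve_left hμν
  -- σ(x, b) = 0
  have hxb : sigmaC n x (N.mulVec y) = 0 := by
    have h := sp0 x (N.mulVec y)
    rw [hSx, hSb, sigmaC_add_left, sigmaC_smul_left, sigmaC_smul_right] at h
    have hba : sigmaC n (N.mulVec x) (N.mulVec y) = 0 := hab
    rw [hba] at h
    have : (μ + ν) * sigmaC n x (N.mulVec y) = 0 := by linear_combination h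
    exact (mul_eq_zero.mp this).resolve_left hμν
  have h := sp0 x y
  rw [hSx, hSy, sigmaC_add_left, sigmaC_add_right, sigmaC_smul_left, sigmaC_smul_right,
    hay, hxb] at h
  have : (μ + ν) * sigmaC n x y = 0 := by linear_combination h
  exact (mul_eq_zero.mp this).resolve_left hμν

/-- the nilpotent part also satisfies the `sp` relation -/
lemma N_sp (hS : InSp n S) (hP : IsUnit P) (hD : D = P * Matrix.diagonal d * P⁻¹)
    (hSDN : S = D + N) (hDN : D * N = N * D) (hN2 : N * N = 0) (z w : Idx n → ℂ) :
    sigmaC n (N.mulVec z) w + sigmaC n z (N.mulVec w) = 0 := by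
  classical
  have sp0 : ∀ u v : Idx n → ℂ,
      sigmaC n (S.mulVec u) v + sigmaC n u (S.mulVec v) = 0 := fun u v => by
    rw [sigmaC_sp hS]; ring
  have hzd := (sum_prj (d := d) hP z).symm
  have hwd := (sum_prj (d := d) hP w).symm
  conv_lhs => rw [hzd, hwd]
  rw [mulVec_sumv, mulVec_sumv, sigmaC_sum_left, sigmaC_sum_left,
    ← Finset.sum_add_distrib]
  refine Finset.sum_eq_zero fun μ hμ => ?_
  rw [sigmaC_sum_right, sigmaC_sum_right, ← Finset.sum_add_distrib]
  refine Finset.sum_eq_zero fun ν hν => ?_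
  set x := prj P d μ z
  set y := prj P d ν w
  have hx : D.mulVec x = μ • x := prj_eigen hP hD μ z
  have hy : D.mulVec y = ν • y := prj_eigen hP hD ν w
  have hSx : S.mulVec x = μ • x + N.mulVec x := by
    rw [hSDN, Matrix.add_mulVec, hx]
  have hSy : S.mulVec y = ν • y + N.mulVec y := by
    rw [hSDN, Matrix.add_mulVec, hy]
  have key : sigmaC n (N.mulVec x) y + sigmaC n x (N.mulVec y)
      = -((μ + ν) * sigmaC n x y) := by
    have h := sp0 x y
    rw [hSx, hSy, sigmaC_add_left, sigmaC_add_right, sigmaC_smul_left, sigmaC_smul_right] at h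
    linear_combination h
  by_cases hc : μ + ν = 0
  · rw [key, hc, zero_mul, neg_zero]
  · rw [key, pairing hS hSDN hDN hN2 hx hy hc, mul_zero, neg_zero]

/-- transfer of an `sp` relation to the real and imaginary parts -/
lemma sp_real_parts {M : Matrix (Idx n) (Idx n) ℂ}
    (hM : ∀ z w, sigmaC n (M.mulVec z) w + sigmaC n z (M.mulVec w) = 0) (v w : Idx n → ℝ) :
    sigmaR n ((M.map Complex.re).mulVec v) w = - sigmaR n v ((M.map Complex.re).mulVec w) ∧
    sigmaR n ((M.map Complex.im).mulVec v) w = - sigmaR n v ((M.map Complex.im).mulVec w) := by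
  have h := hM (realVec n v) (realVec n w)
  rw [mulVec_realVec M v, mulVec_realVec M w, sigmaC_add_left, sigmaC_add_right,
    sigmaC_smul_left, sigmaC_smul_right, sigmaC_real, sigmaC_real, sigmaC_real, sigmaC_real] at h
  constructor
  · have h1 := congrArg Complex.re h
    simp only [Complex.add_re, Complex.mul_re, Complex.I_re, Complex.I_im, Complex.ofReal_re,
      Complex.ofReal_im, Complex.zero_re, zero_mul, one_mul, mul_zero, sub_zero, zero_sub,
      add_zero, neg_zero] at h1
    linarith
  · have h1 := congrArg Complex.im h
    simp only [Complex.add_im, Complex.mul_im, Complex.I_re, Complex.I_im, Complex.ofReal_re,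
      Complex.ofReal_im, Complex.zero_im, zero_mul, one_mul, mul_zero, add_zero, zero_add,
      neg_zero] at h1
    linarith

lemma reVec_mulVec (M : Matrix (Idx n) (Idx n) ℂ) (x : Idx n → ℂ) :
    reVec (M.mulVec x)
      = (M.map Complex.re).mulVec (reVec x) - (M.map Complex.im).mulVec (imVec x) := by
  funext i
  simp [Matrix.mulVec, dotProduct, reVec, imVec, Matrix.map_apply, Complex.re_sum,
    Complex.mul_re, Finset.sum_sub_distrib]
  ring

lemma imVec_mulVec (M : Matrix (Idx n) (Idx n) ℂ) (x : Idx n → ℂ) :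
    imVec (M.mulVec x)
      = (M.map Complex.im).mulVec (reVec x) + (M.map Complex.re).mulVec (imVec x) := by
  funext i
  simp [Matrix.mulVec, dotProduct, reVec, imVec, Matrix.map_apply, Complex.im_sum,
    Complex.mul_im, Finset.sum_add_distrib]
  ring

/-- `S₁` vanishes on real vectors killed by `N` -/
lemma S1_vanish (hS : InSp n S) (hreal : ∀ z ∈ S.charpoly.roots, z.im = 0)
    (hpos : RePosQ n S) (hP : IsUnit P) (hD : D = P * Matrix.diagonal d * P⁻¹)
    (hSDN : S = D + N) (hDN : D * N = N * D) (hN2 : N * N = 0)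
    {v : Idx n → ℝ} (hv : N.mulVec (realVec n v) = 0) :
    (S.map Complex.re).mulVec v = 0 := by
  classical
  obtain ⟨c, hzc, hc⟩ := kerN_decomp hreal hP hD hSDN hDN hN2 hv
  set F := Finset.image d Finset.univ with hF
  -- each conjugated component is an eigenvector for `-μ`
  have hterm : ∀ μ ∈ F, S.mulVec (conjVec n (c μ)) = -μ • conjVec n (c μ) := by
    intro μ hμ
    obtain ⟨hSx, -, him⟩ := hc μ hμ
    by_cases hne : c μ = 0
    · rw [hne, conjVec_zero, Matrix.mulVec_zero, smul_zero]
    · have hμre : μ = ((μ.re : ℝ) : ℂ) := Complex.ext (by simp) (by simp [him hne])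
      have := eig_conj hS hpos (lam := μ.re) (z := c μ) (by rw [← hμre]; exact hSx)
      rw [this, ← hμre]
  have h1 : S.mulVec (realVec n v) = ∑ μ ∈ F, -μ • conjVec n (c μ) := by
    have hcd : realVec n v = ∑ μ ∈ F, conjVec n (c μ) := by
      conv_lhs => rw [← conjVec_realVec v, hzc]
      rw [conjVec_sum]
    conv_lhs => rw [hcd]
    rw [mulVec_sumv]
    exact Finset.sum_congr rfl hterm
  have h2 : conjVec n (S.mulVec (realVec n v)) = ∑ μ ∈ F, μ • conjVec n (c μ) := by
    have hsv : S.mulVec (realVec n v) = ∑ μ ∈ F, μ • c μ := by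
      conv_lhs => rw [hzc]
      rw [mulVec_sumv]
      exact Finset.sum_congr rfl fun μ hμ => (hc μ hμ).1
    rw [hsv, conjVec_sum]
    refine Finset.sum_congr rfl fun μ hμ => ?_
    obtain ⟨-, -, him⟩ := hc μ hμ
    by_cases hne : c μ = 0
    · rw [hne, smul_zero, conjVec_zero, smul_zero]
    · rw [conjVec_smul, Complex.conj_eq_iff_im.2 (him hne)]
  have h3 : S.mulVec (realVec n v) + conjVec n (S.mulVec (realVec n v)) = 0 := by
    rw [h2, h1, ← Finset.sum_add_distrib]
    refine Finset.sum_eq_zero fun μ _ => ?_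
    rw [neg_smul]; abel
  rw [map_re_mulVec]
  funext i
  have h4 := congrFun h3 i
  rw [Pi.add_apply] at h4
  have h5 : (S.mulVec (realVec n v)) i + (starRingEnd ℂ) ((S.mulVec (realVec n v)) i) = 0 := h4
  rw [Complex.add_conj] at h5
  have h6 : ((S.mulVec (realVec n v)) i).re = 0 := by
    have := congrArg Complex.re h5
    simpa using this
  simpa [reVec] using h6

end Main2

end Stmt7
namespace Stmt7

variable {n : ℕ}

lemma reVec_sum {ι : Type*} (s : Finset ι) (f : ι → Idx n → ℂ) :
    reVec (∑ i ∈ s, f i) = ∑ i ∈ s, reVec (f i) := by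
  funext j
  simp [reVec, Finset.sum_apply, Complex.re_sum]

lemma imVec_sum {ι : Type*} (s : Finset ι) (f : ι → Idx n → ℂ) :
    imVec (∑ i ∈ s, f i) = ∑ i ∈ s, imVec (f i) := by
  funext j
  simp [imVec, Finset.sum_apply, Complex.im_sum]

lemma realVec_reVec (z : Idx n → ℂ) :
    realVec n (reVec z) = (2⁻¹ : ℂ) • (z + conjVec n z) := by
  funext i
  show ((z i).re : ℂ) = 2⁻¹ * (z i + (starRingEnd ℂ) (z i))
  rw [Complex.add_conj]
  push_cast
  ring

lemma realVec_imVec (z : Idx n → ℂ) :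
    realVec n (imVec z) = (Complex.I / 2) • (conjVec n z - z) := by
  funext i
  show ((z i).im : ℂ) = Complex.I / 2 * ((starRingEnd ℂ) (z i) - z i)
  rw [show (starRingEnd ℂ) (z i) - z i = -(z i - (starRingEnd ℂ) (z i)) by ring,
    Complex.sub_conj]
  push_cast
  linear_combination (((z i).im : ℝ) : ℂ) * Complex.I_mul_I

lemma map_sub_re (A B : Matrix (Idx n) (Idx n) ℂ) :
    (A - B).map Complex.re = A.map Complex.re - B.map Complex.re := by
  ext i j; simp [Matrix.map_apply, Complex.sub_re]

lemma map_sub_im (A B : Matrix (Idx n) (Idx n) ℂ) :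
    (A - B).map Complex.im = A.map Complex.im - B.map Complex.im := by
  ext i j; simp [Matrix.map_apply, Complex.sub_im]

lemma map_mul_re (A B : Matrix (Idx n) (Idx n) ℂ) :
    (A * B).map Complex.re
      = A.map Complex.re * B.map Complex.re - A.map Complex.im * B.map Complex.im := by
  ext i j
  simp [Matrix.map_apply, Matrix.mul_apply, Complex.re_sum, Complex.mul_re,
    Finset.sum_sub_distrib]
  ring

lemma map_mul_im (A B : Matrix (Idx n) (Idx n) ℂ) :
    (A * B).map Complex.im
      = A.map Complex.re * B.map Complex.im + A.map Complex.im * B.map Complex.re := by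
  ext i j
  simp [Matrix.map_apply, Matrix.mul_apply, Complex.im_sum, Complex.mul_im,
    Finset.sum_add_distrib]
  ring

end Stmt7

open Stmt7


/-- Let `S ∈ sp(n,ℂ)` have purely real spectrum, `Re Q_S ≥ 0` and `N² = 0`.
With `W = N₁(ℝ^{2n}) + N₂(ℝ^{2n})` and `K = W^⊥`: `W` is isotropic;
`K = Ker N₁ ∩ Ker N₂ ⊇ W`; `S₁(K) = 0`, `S₂(K) ⊆ K`, `S₂(W) ⊆ W` (hence `D₁(K) = 0`,
`D₂(K) ⊆ K`, `D₂(W) ⊆ W`); `K^ℂ = Σ_λ Ker(S - λ)`; and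
`W = Σ_{λ ≥ 0} (W ∩ (Ker(S-λ) + Ker(S+λ)))`. -/
theorem statement7 (n : ℕ) (S D N : Matrix (Idx n) (Idx n) ℂ)
    (hS : InSp n S) (hreal : ∀ z ∈ S.charpoly.roots, z.im = 0)
    (hpos : RePosQ n S) (hJ : IsJordanDecomp n S D N) (hN2 : N * N = 0) :
    (∀ v ∈ Wsub n N, ∀ w ∈ Wsub n N, sigmaR n v w = 0) ∧
    Kset n N = {v | (N.map Complex.re).mulVec v = 0 ∧ (N.map Complex.im).mulVec v = 0} ∧
    (Wsub n N : Set (Idx n → ℝ)) ⊆ Kset n N ∧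
    (∀ v ∈ Kset n N, (S.map Complex.re).mulVec v = 0) ∧
    (∀ v ∈ Kset n N, (S.map Complex.im).mulVec v ∈ Kset n N) ∧
    (∀ v ∈ Wsub n N, (S.map Complex.im).mulVec v ∈ Wsub n N) ∧
    (∀ v ∈ Kset n N, (D.map Complex.re).mulVec v = 0) ∧
    (∀ v ∈ Kset n N, (D.map Complex.im).mulVec v ∈ Kset n N) ∧
    (∀ v ∈ Wsub n N, (D.map Complex.im).mulVec v ∈ Wsub n N) ∧
    (∀ z : Idx n → ℂ,
      (z ∈ ⨆ lam : ℝ, kerEig n S (lam : ℂ)) ↔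
        ((fun i => (z i).re) ∈ Kset n N ∧ (fun i => (z i).im) ∈ Kset n N)) ∧
    (∀ v : Idx n → ℝ, v ∈ Wsub n N ↔ v ∈ Submodule.span ℝ
      {w : Idx n → ℝ | w ∈ Wsub n N ∧ ∃ lam : ℝ, 0 ≤ lam ∧
        realVec n w ∈ kerEig n S (lam : ℂ) ⊔ kerEig n S (-(lam : ℂ))}) := by
  classical
  obtain ⟨hSDN, ⟨P, d, hP, hD⟩, -, hDN⟩ := hJ
  have hNsp : ∀ z w, sigmaC n (N.mulVec z) w + sigmaC n z (N.mulVec w) = 0 :=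
    N_sp hS hP hD hSDN hDN hN2
  have hNre : ∀ v w, sigmaR n ((N.map Complex.re).mulVec v) w
      = - sigmaR n v ((N.map Complex.re).mulVec w) := fun v w => (sp_real_parts hNsp v w).1
  have hNim : ∀ v w, sigmaR n ((N.map Complex.im).mulVec v) w
      = - sigmaR n v ((N.map Complex.im).mulVec w) := fun v w => (sp_real_parts hNsp v w).2
  have hmemW1 : ∀ a : Idx n → ℝ, (N.map Complex.re).mulVec a ∈ Wsub n N := fun a =>
    Submodule.mem_sup_left ⟨a, rfl⟩
  have hmemW2 : ∀ a : Idx n → ℝ, (N.map Complex.im).mulVec a ∈ Wsub n N := fun a =>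
    Submodule.mem_sup_right ⟨a, rfl⟩
  -- claim 2 : K = Ker N₁ ∩ Ker N₂
  have hKiff : ∀ v : Idx n → ℝ, v ∈ Kset n N ↔
      (N.map Complex.re).mulVec v = 0 ∧ (N.map Complex.im).mulVec v = 0 := by
    intro v
    constructor
    · intro hv
      constructor
      · refine sigmaR_nondeg' fun a => ?_
        rw [hNre]
        have h0 := hv _ (hmemW1 a)
        rw [h0, neg_zero]
      · refine sigmaR_nondeg' fun a => ?_
        rw [hNim]
        have h0 := hv _ (hmemW2 a)
        rw [h0, neg_zero]
    · rintro ⟨h1, h2⟩ w hw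
      rw [Wsub, Submodule.mem_sup] at hw
      obtain ⟨y, hy, y', hy', rfl⟩ := hw
      obtain ⟨a, rfl⟩ := hy
      obtain ⟨b, rfl⟩ := hy'
      simp only [Matrix.mulVecLin_apply]
      have hz0 : ∀ c : Idx n → ℝ, sigmaR n (0 : Idx n → ℝ) c = 0 := by
        intro c; simp [sigmaR]
      have hz1 : sigmaR n v ((N.map Complex.re).mulVec a) = 0 := by
        have h := hNre v a
        rw [h1, hz0] at h
        linarith
      have hz2 : sigmaR n v ((N.map Complex.im).mulVec b) = 0 := by
        have h := hNim v b
        rw [h2, hz0] at h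
        linarith
      rw [sigmaR_add_right, hz1, hz2, add_zero]
  have hKset : Kset n N = {v | (N.map Complex.re).mulVec v = 0
      ∧ (N.map Complex.im).mulVec v = 0} := Set.ext fun v => hKiff v
  have hKc : ∀ v : Idx n → ℝ, v ∈ Kset n N ↔ N.mulVec (realVec n v) = 0 := fun v =>
    (hKiff v).trans (mulVec_realVec_eq_zero_iff N v).symm
  -- claim 3 : W ⊆ K
  have hWK : (Wsub n N : Set (Idx n → ℝ)) ⊆ Kset n N := by
    intro w hw
    rw [SetLike.mem_coe, Wsub, Submodule.mem_sup] at hw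
    obtain ⟨y, hy, y', hy', rfl⟩ := hw
    obtain ⟨a, rfl⟩ := hy
    obtain ⟨b, rfl⟩ := hy'
    simp only [Matrix.mulVecLin_apply]
    rw [hKc, realVec_add, Matrix.mulVec_add]
    have hz : N.mulVec (N.mulVec (realVec n a)) = 0 := NN_vec hN2 _
    have hzc : N.mulVec (conjVec n (N.mulVec (realVec n a))) = 0 :=
      kerN_conj hS hreal hpos hP hD hSDN hDN hN2 hz
    have hz' : N.mulVec (N.mulVec (realVec n b)) = 0 := NN_vec hN2 _
    have hzc' : N.mulVec (conjVec n (N.mulVec (realVec n b))) = 0 :=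
      kerN_conj hS hreal hpos hP hD hSDN hDN hN2 hz'
    have k1 : N.mulVec (realVec n ((N.map Complex.re).mulVec a)) = 0 := by
      rw [map_re_mulVec, realVec_reVec, Matrix.mulVec_smul, Matrix.mulVec_add, hz, hzc,
        add_zero, smul_zero]
    have k2 : N.mulVec (realVec n ((N.map Complex.im).mulVec b)) = 0 := by
      rw [map_im_mulVec, realVec_imVec, Matrix.mulVec_smul, Matrix.mulVec_sub, hz', hzc',
        sub_zero, smul_zero ]
    rw [k1, k2, add_zero]
  -- claim 1 : W isotropic
  have hisot : ∀ v ∈ Wsub n N, ∀ w ∈ Wsub n N, sigmaR n v w = 0 := fun v hv w hw =>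
    (hWK hv) w hw
  -- claim 4
  have hS1K : ∀ v ∈ Kset n N, (S.map Complex.re).mulVec v = 0 := fun v hv =>
    S1_vanish hS hreal hpos hP hD hSDN hDN hN2 ((hKc v).mp hv)
  -- claim 5
  have hS2K : ∀ v ∈ Kset n N, (S.map Complex.im).mulVec v ∈ Kset n N := by
    intro v hv
    rw [hKc]
    have h1 : S.mulVec (realVec n v) = Complex.I • realVec n ((S.map Complex.im).mulVec v) := by
      rw [mulVec_realVec S v, hS1K v hv, realVec_zero, zero_add]
    have h2 : realVec n ((S.map Complex.im).mulVec v)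
        = (-Complex.I) • S.mulVec (realVec n v) := by
      rw [h1, smul_smul, show (-Complex.I) * Complex.I = 1 by
        rw [neg_mul, Complex.I_mul_I, neg_neg], one_smul]
    rw [h2, Matrix.mulVec_smul]
    have h3 : N.mulVec (S.mulVec (realVec n v)) = 0 := by
      rw [Matrix.mulVec_mulVec, ← hSN hSDN hDN hN2, ← Matrix.mulVec_mulVec,
        (hKc v).mp hv, Matrix.mulVec_zero]
    rw [h3, smul_zero]
  -- claim 6
  have hS2W : ∀ w ∈ Wsub n N, (S.map Complex.im).mulVec w ∈ Wsub n N := by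
    intro w hw
    rw [Wsub, Submodule.mem_sup] at hw
    obtain ⟨y, hy, y', hy', rfl⟩ := hw
    obtain ⟨a, rfl⟩ := hy
    obtain ⟨b, rfl⟩ := hy'
    simp only [Matrix.mulVecLin_apply]
    have hcomm := hSN hSDN hDN hN2
    have him : S.map Complex.re * N.map Complex.im + S.map Complex.im * N.map Complex.re
        = N.map Complex.re * S.map Complex.im + N.map Complex.im * S.map Complex.re := by
      have h := congrArg (fun M => Matrix.map M Complex.im) hcomm
      simpa only [map_mul_im] using h
    have hre : S.map Complex.re * N.map Complex.re - S.map Complex.im * N.map Complex.im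
        = N.map Complex.re * S.map Complex.re - N.map Complex.im * S.map Complex.im := by
      have h := congrArg (fun M => Matrix.map M Complex.re) hcomm
      simpa only [map_mul_re] using h
    rw [Matrix.mulVec_add]
    refine Submodule.add_mem _ ?_ ?_
    · have h4 := congrArg (fun M => M.mulVec a) him
      simp only [Matrix.add_mulVec, ← Matrix.mulVec_mulVec] at h4
      have h5 : (S.map Complex.re).mulVec ((N.map Complex.im).mulVec a) = 0 :=
        hS1K _ (hWK (hmemW2 a))
      rw [h5, zero_add] at h4
      rw [h4]
      exact Submodule.add_mem _ (hmemW1 _) (hmemW2 _)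
    · have h4 := congrArg (fun M => M.mulVec b) hre
      simp only [Matrix.sub_mulVec, ← Matrix.mulVec_mulVec] at h4
      have h5 : (S.map Complex.re).mulVec ((N.map Complex.re).mulVec b) = 0 :=
        hS1K _ (hWK (hmemW1 b))
      rw [h5, zero_sub] at h4
      have e : (S.map Complex.im).mulVec ((N.map Complex.im).mulVec b)
          = (N.map Complex.im).mulVec ((S.map Complex.im).mulVec b)
            - (N.map Complex.re).mulVec ((S.map Complex.re).mulVec b) := by
        have h6 := congrArg Neg.neg h4
        rw [neg_neg] at h6
        rw [h6]
        abel
      rw [e]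
      exact Submodule.sub_mem _ (hmemW2 _) (hmemW1 _)
  -- claims 7-9
  have hDSN : D = S - N := by rw [hSDN]; abel
  have hD1K : ∀ v ∈ Kset n N, (D.map Complex.re).mulVec v = 0 := by
    intro v hv
    rw [hDSN, map_sub_re, Matrix.sub_mulVec, hS1K v hv, ((hKiff v).mp hv).1, sub_zero]
  have hD2K : ∀ v ∈ Kset n N, (D.map Complex.im).mulVec v ∈ Kset n N := by
    intro v hv
    rw [hDSN, map_sub_im, Matrix.sub_mulVec, ((hKiff v).mp hv).2, sub_zero]
    exact hS2K v hv
  have hD2W : ∀ w ∈ Wsub n N, (D.map Complex.im).mulVec w ∈ Wsub n N := by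
    intro w hw
    rw [hDSN, map_sub_im, Matrix.sub_mulVec]
    refine Submodule.sub_mem _ (hS2W w hw) ?_
    have : (N.map Complex.im).mulVec w ∈ LinearMap.range
        (Matrix.mulVecLin (N.map Complex.im)) := ⟨w, rfl⟩
    exact Submodule.mem_sup_right this
  -- claim 10
  have hkerN := kerN_eq hreal hP hD hSDN hDN hN2
  have hc10 : ∀ z : Idx n → ℂ, (z ∈ ⨆ lam : ℝ, kerEig n S (lam : ℂ)) ↔
      ((fun i => (z i).re) ∈ Kset n N ∧ (fun i => (z i).im) ∈ Kset n N) := by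
    intro z
    rw [← hkerN, LinearMap.mem_ker, Matrix.mulVecLin_apply]
    constructor
    · intro hz
      have hzc := kerN_conj hS hreal hpos hP hD hSDN hDN hN2 hz
      constructor
      · rw [hKc]
        show N.mulVec (realVec n (reVec z)) = 0
        rw [realVec_reVec, Matrix.mulVec_smul, Matrix.mulVec_add, hz, hzc, add_zero, smul_zero]
      · rw [hKc]
        show N.mulVec (realVec n (imVec z)) = 0
        rw [realVec_imVec, Matrix.mulVec_smul, Matrix.mulVec_sub, hz, hzc, sub_zero,
          smul_zero]
    · rintro ⟨h1, h2⟩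
      rw [hKc] at h1 h2
      conv_lhs => rw [z_decomp z]
      rw [Matrix.mulVec_add, Matrix.mulVec_smul]
      rw [show N.mulVec (realVec n (reVec z)) = 0 from h1,
        show N.mulVec (realVec n (imVec z)) = 0 from h2, smul_zero, add_zero]
  -- claim 11
  have hc11 : ∀ v : Idx n → ℝ, v ∈ Wsub n N ↔ v ∈ Submodule.span ℝ
      {w : Idx n → ℝ | w ∈ Wsub n N ∧ ∃ lam : ℝ, 0 ≤ lam ∧
        realVec n w ∈ kerEig n S (lam : ℂ) ⊔ kerEig n S (-(lam : ℂ))} := by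
    intro v
    set genSet : Set (Idx n → ℝ) := {w : Idx n → ℝ | w ∈ Wsub n N ∧ ∃ lam : ℝ, 0 ≤ lam ∧
        realVec n w ∈ kerEig n S (lam : ℂ) ⊔ kerEig n S (-(lam : ℂ))} with hgen
    constructor
    · intro hv
      -- components of N prj μ (realVec a) are in the span
      have key : ∀ a : Idx n → ℝ, ∀ μ ∈ Finset.image d Finset.univ,
          reVec (N.mulVec (prj P d μ (realVec n a))) ∈ Submodule.span ℝ genSet ∧
          imVec (N.mulVec (prj P d μ (realVec n a))) ∈ Submodule.span ℝ genSet := by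
        intro a μ hμ
        set y := N.mulVec (prj P d μ (realVec n a)) with hy
        by_cases hy0 : y = 0
        · rw [hy0]
          constructor
          · rw [show reVec (0 : Idx n → ℂ) = 0 from by funext i; simp [reVec]]
            exact Submodule.zero_mem _
          · rw [show imVec (0 : Idx n → ℂ) = 0 from by funext i; simp [imVec]]
            exact Submodule.zero_mem _
        · have hDy : D.mulVec y = μ • y := by
            rw [hy, Matrix.mulVec_mulVec, hDN, ← Matrix.mulVec_mulVec, prj_eigen hP hD,
              Matrix.mulVec_smul]
          have hNy : N.mulVec y = 0 := NN_vec hN2 _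
          have hSy : S.mulVec y = μ • y := by
            rw [hSDN, Matrix.add_mulVec, hDy, hNy, add_zero]
          have him : μ.im = 0 := eig_real hreal hy0 hSy
          have hμre : μ = ((μ.re : ℝ) : ℂ) := Complex.ext (by simp) (by simp [him])
          have hyk : y ∈ kerEig n S ((μ.re : ℝ) : ℂ) :=
            mem_kerEig.mpr (by rw [← hμre]; exact hSy)
          have hyck : conjVec n y ∈ kerEig n S (-((μ.re : ℝ) : ℂ)) :=
            mem_kerEig.mpr (eig_conj hS hpos (by rw [← hμre]; exact hSy))
          have hsup : y ∈ kerEig n S ((|μ.re| : ℝ) : ℂ) ⊔ kerEig n S (-((|μ.re| : ℝ) : ℂ))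
              ∧ conjVec n y ∈ kerEig n S ((|μ.re| : ℝ) : ℂ)
                ⊔ kerEig n S (-((|μ.re| : ℝ) : ℂ)) := by
            rcases abs_cases μ.re with ⟨he, -⟩ | ⟨he, -⟩
            · rw [he]
              exact ⟨Submodule.mem_sup_left hyk, Submodule.mem_sup_right hyck⟩
            · rw [he, Complex.ofReal_neg, neg_neg]
              exact ⟨Submodule.mem_sup_right hyk, Submodule.mem_sup_left hyck⟩
          have hWre : reVec y ∈ Wsub n N := by
            rw [hy, reVec_mulVec]
            exact Submodule.sub_mem _ (hmemW1 _) (hmemW2 _)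
          have hWim : imVec y ∈ Wsub n N := by
            rw [hy, imVec_mulVec]
            exact Submodule.add_mem _ (hmemW2 _) (hmemW1 _)
          constructor
          · refine Submodule.subset_span ⟨hWre, |μ.re|, abs_nonneg _, ?_⟩
            rw [realVec_reVec]
            exact Submodule.smul_mem _ _ (Submodule.add_mem _ hsup.1 hsup.2)
          · refine Submodule.subset_span ⟨hWim, |μ.re|, abs_nonneg _, ?_⟩
            rw [realVec_imVec]
            exact Submodule.smul_mem _ _ (Submodule.sub_mem _ hsup.2 hsup.1)
      have main : ∀ a : Idx n → ℝ,
          (N.map Complex.re).mulVec a ∈ Submodule.span ℝ genSet ∧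
          (N.map Complex.im).mulVec a ∈ Submodule.span ℝ genSet := by
        intro a
        have hdec : N.mulVec (realVec n a)
            = ∑ μ ∈ Finset.image d Finset.univ, N.mulVec (prj P d μ (realVec n a)) := by
          conv_lhs => rw [← sum_prj (d := d) hP (realVec n a)]
          rw [mulVec_sumv]
        constructor
        · rw [map_re_mulVec, hdec, reVec_sum]
          exact Submodule.sum_mem _ fun μ hμ => (key a μ hμ).1
        · rw [map_im_mulVec, hdec, imVec_sum]
          exact Submodule.sum_mem _ fun μ hμ => (key a μ hμ).2
      rw [Wsub, Submodule.mem_sup] at hv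
      obtain ⟨y, hy, y', hy', rfl⟩ := hv
      obtain ⟨a, rfl⟩ := hy
      obtain ⟨b, rfl⟩ := hy'
      simp only [Matrix.mulVecLin_apply]
      exact Submodule.add_mem _ (main a).1 (main b).2
    · intro hv
      have hle : Submodule.span ℝ genSet ≤ Wsub n N :=
        Submodule.span_le.mpr fun w hw => hw.1
      exact hle hv
  exact ⟨hisot, hKset, hWK, hS1K, hS2K, hS2W, hD1K, hD2K, hD2W, hc10, hc11⟩
end
end
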